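/- arXiv:math/0609187 — 5 statements merged into one kernel-verified Lean document; each statement's English description precedes it below -/
import Mathlib

section
/- Let $R_1, R_2, R_3 \ge 0$ be extended nonnegative reals, and define $Q_j = \frac{12}{2+R_j}$ and $R$ by $\frac{1}{R} = \frac{1}{2+2R_1} + \frac{1}{2+2R_2} + \frac{1}{2+2R_3}$. If each $Q_j \le 2$ (i.e., each $R_j \ge 4$), then $\tfrac12(Q_1+Q_2+Q_3) - \tfrac16(Q_1Q_2 + Q_1Q_3 + Q_2Q_3) \le \frac{12}{2+R}$. -/
open scoped ENNReal

private lemma aux1 (a : ℝ≥0∞) :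
    (12 / (2 + a)).toReal =
      24 * ((2 + 2 * a)⁻¹).toReal / (1 + 2 * ((2 + 2 * a)⁻¹).toReal) := by
  rcases eq_or_ne a ∞ with h | h
  · simp [h]
  · have ht : 0 ≤ a.toReal := ENNReal.toReal_nonneg
    rw [ENNReal.toReal_div, ENNReal.toReal_inv,
      ENNReal.toReal_add (by simp) h,
      ENNReal.toReal_add (by simp) (by finiteness),
      ENNReal.toReal_mul]
    simp only [ENNReal.toReal_ofNat]
    have h2 : (0:ℝ) < 2 + a.toReal := by linarith
    have h3 : (0:ℝ) < 2 + 2 * a.toReal := by linarith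
    field_simp
    ring

private lemma aux2 (a : ℝ≥0∞) (ha : a ≠ 0) :
    (12 / (2 + a)).toReal = 12 * (a⁻¹).toReal / (1 + 2 * (a⁻¹).toReal) := by
  rcases eq_or_ne a ∞ with h | h
  · simp [h]
  · have ht : 0 < a.toReal := ENNReal.toReal_pos ha h
    rw [ENNReal.toReal_div, ENNReal.toReal_inv, ENNReal.toReal_add (by simp) h]
    simp only [ENNReal.toReal_ofNat]
    field_simp
    ring

private lemma key (s1 s2 s3 : ℝ) (h1 : 0 ≤ s1) (h2 : 0 ≤ s2) (h3 : 0 ≤ s3) :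
    (24 * s1 / (1 + 2 * s1) + 24 * s2 / (1 + 2 * s2) + 24 * s3 / (1 + 2 * s3)) / 2 -
      (24 * s1 / (1 + 2 * s1) * (24 * s2 / (1 + 2 * s2)) +
        24 * s1 / (1 + 2 * s1) * (24 * s3 / (1 + 2 * s3)) +
        24 * s2 / (1 + 2 * s2) * (24 * s3 / (1 + 2 * s3))) / 6 ≤
      12 * (s1 + s2 + s3) / (1 + 2 * (s1 + s2 + s3)) := by
  have d1 : (0:ℝ) < 1 + 2 * s1 := by linarith
  have d2 : (0:ℝ) < 1 + 2 * s2 := by linarith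
  have d3 : (0:ℝ) < 1 + 2 * s3 := by linarith
  have dS : (0:ℝ) < 1 + 2 * (s1 + s2 + s3) := by linarith
  have hL : (24 * s1 / (1 + 2 * s1) + 24 * s2 / (1 + 2 * s2) + 24 * s3 / (1 + 2 * s3)) / 2 -
      (24 * s1 / (1 + 2 * s1) * (24 * s2 / (1 + 2 * s2)) +
        24 * s1 / (1 + 2 * s1) * (24 * s3 / (1 + 2 * s3)) +
        24 * s2 / (1 + 2 * s2) * (24 * s3 / (1 + 2 * s3))) / 6 =
      (12 * (s1 * ((1 + 2 * s2) * (1 + 2 * s3)) + s2 * ((1 + 2 * s1) * (1 + 2 * s3)) +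
          s3 * ((1 + 2 * s1) * (1 + 2 * s2))) -
        96 * (s1 * s2 * (1 + 2 * s3) + s1 * s3 * (1 + 2 * s2) + s2 * s3 * (1 + 2 * s1))) /
      ((1 + 2 * s1) * (1 + 2 * s2) * (1 + 2 * s3)) := by
    field_simp
    ring
  rw [hL, div_le_div_iff₀ (by positivity) dS]
  nlinarith [mul_nonneg h2 h3, mul_nonneg h1 h3, mul_nonneg h1 h2,
    mul_nonneg (mul_nonneg h2 h3) h3, mul_nonneg (mul_nonneg h2 h2) h3,
    mul_nonneg (mul_nonneg h1 h3) h3, mul_nonneg (mul_nonneg h1 h2) h3,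
    mul_nonneg (mul_nonneg h1 h2) h2, mul_nonneg (mul_nonneg h1 h1) h3,
    mul_nonneg (mul_nonneg h1 h1) h2,
    mul_nonneg (mul_nonneg (mul_nonneg h1 h2) h3) h3,
    mul_nonneg (mul_nonneg (mul_nonneg h1 h2) h2) h3,
    mul_nonneg (mul_nonneg (mul_nonneg h1 h1) h2) h3]

/-- The key algebraic inequality in the inductive step of Lyons' theorem:
with `Q j = 12 / (2 + R j)` and `R` the series-parallel resistance
`1/R = ∑ 1/(2 + 2 R j)`, if each `Q j ≤ 2` then the inclusion-exclusion
expression in the `Q j` is at most `12 / (2 + R)`. -/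
theorem lyons_inductive_step (R1 R2 R3 : ℝ≥0∞) (Q1 Q2 Q3 : ℝ)
    (hQ1 : Q1 = (12 / (2 + R1)).toReal)
    (hQ2 : Q2 = (12 / (2 + R2)).toReal)
    (hQ3 : Q3 = (12 / (2 + R3)).toReal)
    (h1 : Q1 ≤ 2) (h2 : Q2 ≤ 2) (h3 : Q3 ≤ 2)
    (R : ℝ≥0∞)
    (hR : R⁻¹ = (2 + 2 * R1)⁻¹ + (2 + 2 * R2)⁻¹ + (2 + 2 * R3)⁻¹) :
    (Q1 + Q2 + Q3) / 2 - (Q1 * Q2 + Q1 * Q3 + Q2 * Q3) / 6 ≤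
      (12 / (2 + R)).toReal := by
  set s1 : ℝ := ((2 + 2 * R1)⁻¹).toReal with hs1
  set s2 : ℝ := ((2 + 2 * R2)⁻¹).toReal with hs2
  set s3 : ℝ := ((2 + 2 * R3)⁻¹).toReal with hs3
  have f1 : (2 + 2 * R1)⁻¹ ≠ ∞ := by simp [ENNReal.inv_ne_top]
  have f2 : (2 + 2 * R2)⁻¹ ≠ ∞ := by simp [ENNReal.inv_ne_top]
  have f3 : (2 + 2 * R3)⁻¹ ≠ ∞ := by simp [ENNReal.inv_ne_top]
  have hRne : R ≠ 0 := by
    intro h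
    rw [h, ENNReal.inv_zero] at hR
    exact (ENNReal.add_ne_top.mpr ⟨ENNReal.add_ne_top.mpr ⟨f1, f2⟩, f3⟩) hR.symm
  have hS : (R⁻¹).toReal = s1 + s2 + s3 := by
    rw [hR, ENNReal.toReal_add (ENNReal.add_ne_top.mpr ⟨f1, f2⟩) f3,
      ENNReal.toReal_add f1 f2]
  rw [hQ1, hQ2, hQ3, aux1 R1, aux1 R2, aux1 R3, aux2 R hRne, hS]
  exact key s1 s2 s3 ENNReal.toReal_nonneg ENNReal.toReal_nonneg ENNReal.toReal_nonneg
end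

section
/- Let $T'$ be a finite subtree of the full rooted ternary tree of depth $n$ (containing the root, with leaves among the depth-$n$ vertices). Remove each edge of $T'$ independently with probability $1/2$, and let $P(T')$ be the probability that a path of retained edges connects the root to some depth-$n$ vertex of $T'$. Assign to each edge of $T'$ joining a depth-$(k-1)$ vertex to a depth-$k$ vertex the resistance $2^k$, and let $R(T')$ be the effective electrical resistance between the root and the set of depth-$n$ vertices. Then $P(T') \le \frac{12}{2 + R(T')}$. -/
open scoped ENNReal Classical

/-- A subtree of the rooted ternary tree of depth `n`: vertices are ternary
strings (lists over `Fin 3`), it contains the root (the empty string), is closed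
under taking prefixes, and has depth at most `n`. -/
def IsSubtree (n : ℕ) (T : List (Fin 3) → Prop) : Prop :=
  T [] ∧ (∀ l a, T (l ++ [a]) → T l) ∧ ∀ l, T l → l.length ≤ n

/-- The edges of the full rooted ternary tree of depth `n`, indexed by their
lower endpoint: the edge at depth `k+1` is determined by a vertex at depth
`k+1`, i.e. a string of length `k+1`. -/
def TernaryEdges (n : ℕ) := Σ k : Fin n, (Fin (k + 1) → Fin 3)

/-- The percolation configuration `ω` (`true` = edge retained) admits a fully
retained path from the root to a depth-`n` vertex of `T`. -/
def Survives (n : ℕ) (T : List (Fin 3) → Prop) (ω : TernaryEdges n → Bool) : Prop :=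
  ∃ s : Fin n → Fin 3, T (List.ofFn s) ∧
    ∀ k : Fin n, ω ⟨k, fun i => s (Fin.castLE k.isLt i)⟩ = true

/-- The survival probability of Bernoulli(1/2) bond percolation on the subtree
`T` of the depth-`n` ternary tree: each edge is removed independently with
probability 1/2 (configurations are uniform), and we ask for a retained path
from the root to depth `n`. -/
noncomputable def survivalProb (n : ℕ) (T : List (Fin 3) → Prop) : ℝ :=
  (Nat.card {ω : TernaryEdges n → Bool // Survives n T ω} : ℝ) /
    (Nat.card (TernaryEdges n → Bool) : ℝ)

/-- Effective electrical resistance from a vertex `v` (at depth `v.length`) to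
depth `v.length + d` in the subtree `T`, where each edge joining depth `k-1` to
depth `k` has resistance `2 ^ k`, computed by the series-parallel recursion;
empty branches contribute resistance `∞` (i.e. conductance `0`). -/
noncomputable def resistAux (T : List (Fin 3) → Prop) : ℕ → List (Fin 3) → ℝ≥0∞
  | 0, _ => 0
  | d + 1, v =>
      (∑ a : Fin 3, if T (v ++ [a]) then
        ((2 : ℝ≥0∞) ^ (v.length + 1) + resistAux T d (v ++ [a]))⁻¹ else 0)⁻¹

/-- The effective resistance between the root and the depth-`n` vertices. -/
noncomputable def resist (n : ℕ) (T : List (Fin 3) → Prop) : ℝ≥0∞ :=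
  resistAux T n []


/-!
Let `σ(v) = 2 ^ |v| / (2 ^ |v| + R(v))`, where `R(v)` is the resistance from `v` down to depth `n`.
The series-parallel law turns into `σ(v) = S / (2 + S)`, with `S` the sum of `σ` over the children
of `v` in the tree, while conditioning on the three edges below `v` gives
`P(v) = 1 - ∏ₐ (1 - P(va) / 2)`. Induction from depth `n` upwards then proves
`P(v) (1 + σ(v)) ≤ 12 σ(v)`; the inductive step is an elementary inequality in three pairs of
variables, which needs `P ≤ 1` as well. At the root `σ = 1 / (1 + R)`, and the invariant reads
`P ≤ 12 / (2 + R)`.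
-/

section UniformProb

variable {α β : Type*}

noncomputable def uniformProb (p : α → Prop) : ℝ :=
  Nat.card {x // p x} / Nat.card α

theorem uniformProb_nonneg (p : α → Prop) : 0 ≤ uniformProb p := by
  unfold uniformProb; positivity

theorem uniformProb_le_one [Finite α] (p : α → Prop) : uniformProb p ≤ 1 :=
  div_le_one_of_le₀ (by exact_mod_cast Finite.card_subtype_le p) (Nat.cast_nonneg _)

theorem uniformProb_of_forall_not {p : α → Prop} (h : ∀ x, ¬ p x) : uniformProb p = 0 := by
  have : IsEmpty {x // p x} := ⟨fun x => h x.1 x.2⟩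
  rw [uniformProb, Nat.card_of_isEmpty, Nat.cast_zero, zero_div]

theorem uniformProb_congr {p : α → Prop} {q : β → Prop} (e : α ≃ β)
    (h : ∀ x, p x ↔ q (e x)) :
    uniformProb p = uniformProb q := by
  rw [uniformProb, uniformProb, Nat.card_congr (e.subtypeEquiv h), Nat.card_congr e]

theorem uniformProb_not [Finite α] [Nonempty α] (p : α → Prop) :
    uniformProb (fun x => ¬ p x) = 1 - uniformProb p := by
  have hcard := Nat.card_congr (Equiv.sumCompl p)
  rw [Nat.card_sum] at hcard
  have hpos : (0 : ℝ) < Nat.card α := by exact_mod_cast Nat.card_pos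
  rw [uniformProb, uniformProb, eq_sub_iff_add_eq, ← add_div, div_eq_one_iff_eq hpos.ne',
    ← hcard, Nat.cast_add, add_comm]

theorem uniformProb_prod (p : α → Prop) (q : β → Prop) :
    uniformProb (fun x : α × β => p x.1 ∧ q x.2) = uniformProb p * uniformProb q := by
  rw [uniformProb, uniformProb, uniformProb, Nat.card_congr Equiv.subtypeProdEquivProd,
    Nat.card_prod, Nat.card_prod, Nat.cast_mul, Nat.cast_mul, mul_div_mul_comm]

theorem uniformProb_pi {ι : Type*} [Fintype ι] {β : ι → Type*} (p : ∀ i, β i → Prop) :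
    uniformProb (fun x : ∀ i, β i => ∀ i, p i (x i)) = ∏ i, uniformProb (p i) := by
  rw [uniformProb, Nat.card_congr (Equiv.subtypePiEquivPi), Nat.card_pi, Nat.card_pi,
    Nat.cast_prod, Nat.cast_prod, ← Finset.prod_div_distrib]
  rfl

theorem uniformProb_eq_true : uniformProb (fun b : Bool => b = true) = 1 / 2 := by
  simp [uniformProb]

end UniformProb

namespace TernaryEdges

instance (n : ℕ) : Fintype (TernaryEdges n) :=
  inferInstanceAs (Fintype (Σ k : Fin n, (Fin (k + 1) → Fin 3)))

def root {m : ℕ} (a : Fin 3) : TernaryEdges (m + 1) := ⟨0, fun _ => a⟩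

def child {m : ℕ} (a : Fin 3) (e : TernaryEdges m) : TernaryEdges (m + 1) :=
  ⟨e.1.succ, Fin.cons a e.2⟩

/-- The edge of the path `s` entering depth `k + 1`. -/
def path {n : ℕ} (s : Fin n → Fin 3) (k : Fin n) : TernaryEdges n :=
  ⟨k, fun i => s (Fin.castLE k.isLt i)⟩

theorem path_cons_zero {m : ℕ} (a : Fin 3) (s : Fin m → Fin 3) :
    path (Fin.cons a s : Fin (m + 1) → Fin 3) 0 = root a := by
  refine Sigma.ext rfl (heq_of_eq (funext fun i => ?_))
  rw [Fin.fin_one_eq_zero i]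
  rfl

theorem path_cons_succ {m : ℕ} (a : Fin 3) (s : Fin m → Fin 3) (k : Fin m) :
    path (Fin.cons a s : Fin (m + 1) → Fin 3) k.succ = child a (path s k) := by
  refine Sigma.ext rfl (heq_of_eq (funext fun i => ?_))
  exact Fin.cases rfl (fun _ => rfl) i

def split (m : ℕ) : Fin 3 ⊕ Fin 3 × TernaryEdges m ≃ TernaryEdges (m + 1) where
  toFun
    | .inl a => root a
    | .inr (a, e) => child a e
  invFun
    | ⟨⟨0, _⟩, g⟩ => .inl (g 0)
    | ⟨⟨k + 1, hk⟩, g⟩ => .inr (g 0, ⟨⟨k, Nat.lt_of_succ_lt_succ hk⟩, Fin.tail g⟩)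
  left_inv := by
    rintro (a | ⟨a, ⟨k, g⟩⟩) <;> rfl
  right_inv := by
    rintro ⟨⟨_ | k, hk⟩, g⟩
    · refine Sigma.ext rfl (heq_of_eq (funext fun i => ?_))
      rw [Fin.fin_one_eq_zero i]
      rfl
    · exact Sigma.ext rfl (heq_of_eq (Fin.cons_self_tail g))

end TernaryEdges

open TernaryEdges in
def configSplit (m : ℕ) :
    (TernaryEdges (m + 1) → Bool) ≃ (Fin 3 → Bool × (TernaryEdges m → Bool)) :=
  ((split m).symm.arrowCongr (Equiv.refl Bool)).trans <|
    (Equiv.sumArrowEquivProdArrow _ _ _).trans <|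
      ((Equiv.refl _).prodCongr (Equiv.curry _ _ _)).trans
        (Equiv.arrowProdEquivProdArrow _ _ _).symm

theorem configSplit_apply {m : ℕ} (ω : TernaryEdges (m + 1) → Bool) (a : Fin 3) :
    configSplit m ω a = (ω (TernaryEdges.root a), fun e => ω (TernaryEdges.child a e)) :=
  rfl

def subtree (T : List (Fin 3) → Prop) (v : List (Fin 3)) : List (Fin 3) → Prop :=
  fun l => T (v ++ l)

theorem subtree_subtree (T : List (Fin 3) → Prop) (v w : List (Fin 3)) :
    subtree (subtree T v) w = subtree T (v ++ w) := by
  funext l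
  simp only [subtree, List.append_assoc]

theorem survives_iff_path (n : ℕ) (T : List (Fin 3) → Prop) (ω : TernaryEdges n → Bool) :
    Survives n T ω ↔
      ∃ s : Fin n → Fin 3, T (List.ofFn s) ∧ ∀ k, ω (TernaryEdges.path s k) = true :=
  Iff.rfl

theorem survives_succ_iff (m : ℕ) (T : List (Fin 3) → Prop)
    (ω : TernaryEdges (m + 1) → Bool) :
    Survives (m + 1) T ω ↔ ∃ a, ω (TernaryEdges.root a) = true ∧
      Survives m (subtree T [a]) (fun e => ω (TernaryEdges.child a e)) := by
  simp only [survives_iff_path, Fin.exists_fin_succ_pi, List.ofFn_cons, Fin.forall_fin_succ,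
    TernaryEdges.path_cons_zero, TernaryEdges.path_cons_succ, subtree, List.singleton_append]
  grind

theorem survivalProb_eq_uniformProb (n : ℕ) (T : List (Fin 3) → Prop) :
    survivalProb n T = uniformProb (Survives n T) :=
  rfl

theorem survivalProb_nonneg (n : ℕ) (T : List (Fin 3) → Prop) : 0 ≤ survivalProb n T :=
  uniformProb_nonneg _

theorem survivalProb_le_one (n : ℕ) (T : List (Fin 3) → Prop) : survivalProb n T ≤ 1 :=
  uniformProb_le_one _

theorem survivalProb_succ (m : ℕ) (T : List (Fin 3) → Prop) :
    survivalProb (m + 1) T = 1 - ∏ a, (1 - survivalProb m (subtree T [a]) / 2) := by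
  calc survivalProb (m + 1) T = 1 - uniformProb (fun ω => ¬ Survives (m + 1) T ω) := by
        rw [uniformProb_not, sub_sub_cancel, survivalProb_eq_uniformProb]
    _ = 1 - uniformProb (fun x : Fin 3 → Bool × (TernaryEdges m → Bool) =>
          ∀ a, ¬ ((x a).1 = true ∧ Survives m (subtree T [a]) (x a).2)) := by
        congr 1
        exact uniformProb_congr (configSplit m) fun ω => by
          simp only [survives_succ_iff, configSplit_apply, not_exists]
    _ = 1 - ∏ a, (1 - survivalProb m (subtree T [a]) / 2) := by
        rw [uniformProb_pi fun a (y : Bool × _) =>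
          ¬ (y.1 = true ∧ Survives m (subtree T [a]) y.2)]
        refine congrArg _ (Finset.prod_congr rfl fun a _ => ?_)
        rw [uniformProb_not, uniformProb_prod (fun b : Bool => b = true), uniformProb_eq_true,
          survivalProb_eq_uniformProb]
        ring

def PrefixClosed (T : List (Fin 3) → Prop) : Prop :=
  ∀ l a, T (l ++ [a]) → T l

theorem PrefixClosed.of_append {T : List (Fin 3) → Prop} (hT : PrefixClosed T)
    (l l' : List (Fin 3)) (h : T (l ++ l')) : T l := by
  induction l' using List.reverseRecOn with
  | nil => simpa using h
  | append_singleton l' a ih => exact ih (hT _ a (by simpa only [List.append_assoc] using h))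

theorem survivalProb_subtree_eq_zero {T : List (Fin 3) → Prop} (hT : PrefixClosed T)
    {v : List (Fin 3)} (hv : ¬ T v) (n : ℕ) : survivalProb n (subtree T v) = 0 :=
  uniformProb_of_forall_not fun _ ⟨s, hs, _⟩ => hv (hT.of_append v (List.ofFn s) hs)

/-- The normalized conductance `σ(v) = 2 ^ |v| / (2 ^ |v| + R(v))` at a vertex `v` whose
subtree has remaining depth `d`: see `ofReal_normCond`. -/
noncomputable def normCond (T : List (Fin 3) → Prop) : ℕ → List (Fin 3) → ℝ
  | 0, _ => 1
  | d + 1, v =>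
      let S := ∑ a : Fin 3, if T (v ++ [a]) then normCond T d (v ++ [a]) else 0
      S / (2 + S)

theorem normCond_nonneg (T : List (Fin 3) → Prop) : ∀ d v, 0 ≤ normCond T d v
  | 0, _ => zero_le_one
  | d + 1, v => by
    have hS : 0 ≤ ∑ a : Fin 3, if T (v ++ [a]) then normCond T d (v ++ [a]) else 0 :=
      Finset.sum_nonneg fun a _ => by split_ifs <;> simp [normCond_nonneg T d]
    simp only [normCond]
    positivity

theorem ofReal_div_add_inv {β s : ℝ} (hβ : 0 < β) (hs : 0 ≤ s) {C : ℝ≥0∞}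
    (hC : ENNReal.ofReal s = ENNReal.ofReal (2 * β) * C) :
    ENNReal.ofReal (s / (2 + s)) = ENNReal.ofReal β / (ENNReal.ofReal β + C⁻¹) := by
  have h2β : ENNReal.ofReal (2 * β) ≠ 0 := by positivity
  rcases hs.eq_or_lt with rfl | hs
  · rw [ENNReal.ofReal_zero, eq_comm, mul_eq_zero] at hC
    simp [hC.resolve_left h2β]
  · have hC' : C = ENNReal.ofReal (s / (2 * β)) := by
      rw [ENNReal.ofReal_div_of_pos (by positivity), hC,
        mul_comm, ENNReal.mul_div_cancel_right h2β ENNReal.ofReal_ne_top]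
    rw [hC', ← ENNReal.ofReal_inv_of_pos (by positivity),
      ← ENNReal.ofReal_add hβ.le (by positivity), ← ENNReal.ofReal_div_of_pos (by positivity)]
    congr 1
    field_simp
    ring

theorem ofReal_normCond (T : List (Fin 3) → Prop) :
    ∀ d v, ENNReal.ofReal (normCond T d v) = 2 ^ v.length / (2 ^ v.length + resistAux T d v)
  | 0, v => by
    rw [resistAux, add_zero, ENNReal.div_self (pow_ne_zero _ two_ne_zero) (by simp), normCond,
      ENNReal.ofReal_one]
  | d + 1, v => by
    have hpow : ∀ k : ℕ, (2 : ℝ≥0∞) ^ k = ENNReal.ofReal (2 ^ k) := fun k => by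
      rw [ENNReal.ofReal_pow zero_le_two, ENNReal.ofReal_ofNat]
    rw [resistAux, hpow, normCond]
    refine ofReal_div_add_inv (by positivity) ?_ ?_
    · exact Finset.sum_nonneg fun a _ => by split_ifs <;> simp [normCond_nonneg T d]
    · rw [ENNReal.ofReal_sum_of_nonneg fun a _ => by split_ifs <;> simp [normCond_nonneg T d],
        Finset.mul_sum]
      refine Finset.sum_congr rfl fun a _ => ?_
      split_ifs
      · rw [ofReal_normCond T d, List.length_append, List.length_singleton, ← pow_succ', hpow,
          div_eq_mul_inv]
      · simp

theorem one_sub_prod_mul_one_add_sum_le {p s : Fin 3 → ℝ} (hp₀ : ∀ i, 0 ≤ p i)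
    (hp₁ : ∀ i, p i ≤ 1) (hs : ∀ i, 0 ≤ s i) (hps : ∀ i, p i * (1 + s i) ≤ 12 * s i) :
    (1 - ∏ i, (1 - p i / 2)) * (1 + ∑ i, s i) ≤ 6 * ∑ i, s i := by
  simp only [Fin.prod_univ_three, Fin.sum_univ_three]
  nlinarith [hp₁ 0, hp₁ 1, hp₁ 2, hps 0, hps 1, hps 2, hs 0, hs 1, hs 2,
    mul_nonneg (hp₀ 0) (hp₀ 1), mul_nonneg (hp₀ 0) (hp₀ 2), mul_nonneg (hp₀ 1) (hp₀ 2),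
    mul_nonneg (mul_nonneg (hp₀ 0) (hp₀ 1)) (hp₀ 2), mul_nonneg (hs 0) (hs 1),
    mul_nonneg (hs 0) (hs 2), mul_nonneg (hs 1) (hs 2), mul_nonneg (hp₀ 0) (hs 1),
    mul_nonneg (hp₀ 1) (hs 2), mul_nonneg (hp₀ 2) (hs 0), mul_nonneg (hp₀ 0) (hs 2),
    mul_nonneg (hp₀ 1) (hs 0), mul_nonneg (hp₀ 2) (hs 1)]

theorem survivalProb_mul_one_add_normCond_le {T : List (Fin 3) → Prop} (hT : PrefixClosed T) :
    ∀ d v, survivalProb d (subtree T v) * (1 + normCond T d v) ≤ 12 * normCond T d v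
  | 0, v => by
    rw [normCond]
    linarith [survivalProb_le_one 0 (subtree T v)]
  | d + 1, v => by
    set s : Fin 3 → ℝ := fun a => if T (v ++ [a]) then normCond T d (v ++ [a]) else 0
    have hs : ∀ a, 0 ≤ s a := fun a => by
      simp only [s]; split_ifs <;> simp [normCond_nonneg T d]
    have hps : ∀ a, survivalProb d (subtree T (v ++ [a])) * (1 + s a) ≤ 12 * s a := fun a => by
      by_cases ha : T (v ++ [a])
      · simpa only [s, if_pos ha] using survivalProb_mul_one_add_normCond_le hT d (v ++ [a])
      · simp [s, ha, survivalProb_subtree_eq_zero hT ha]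
    have hstep := one_sub_prod_mul_one_add_sum_le
      (p := fun a => survivalProb d (subtree T (v ++ [a])))
      (fun _ => survivalProb_nonneg _ _) (fun _ => survivalProb_le_one _ _) hs hps
    have hS : 0 ≤ ∑ a, s a := Finset.sum_nonneg fun a _ => hs a
    change _ * (1 + (∑ a, s a) / (2 + ∑ a, s a)) ≤ 12 * ((∑ a, s a) / (2 + ∑ a, s a))
    simp only [survivalProb_succ, subtree_subtree]
    calc _ = 2 * ((1 - ∏ a, (1 - survivalProb d (subtree T (v ++ [a])) / 2)) * (1 + ∑ a, s a))
          / (2 + ∑ a, s a) := by field_simp; ring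
      _ ≤ 2 * (6 * ∑ a, s a) / (2 + ∑ a, s a) := by gcongr
      _ = 12 * ((∑ a, s a) / (2 + ∑ a, s a)) := by ring

theorem ofReal_le_twelve_div {p σ : ℝ} {R : ℝ≥0∞} (hσ : 0 ≤ σ)
    (hσR : ENNReal.ofReal σ = 1 / (1 + R)) (h : p * (1 + σ) ≤ 12 * σ) :
    ENNReal.ofReal p ≤ 12 / (2 + R) := by
  rcases eq_or_ne R ⊤ with rfl | hR
  · have hσ0 : σ = 0 := by simpa [hσ.ge_iff_eq'] using hσR
    have hp : p ≤ 0 := by simpa [hσ0] using h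
    simp [ENNReal.ofReal_of_nonpos hp]
  · lift R to NNReal using hR
    have hr : (0 : ℝ) ≤ R := R.2
    have hcoe : ∀ c : ℝ, 0 ≤ c → ENNReal.ofReal (c + R) = ENNReal.ofReal c + R :=
      fun c hc => by rw [ENNReal.ofReal_add hc hr, ENNReal.ofReal_coe_nnreal]
    rw [show (1 : ℝ≥0∞) / (1 + R) = ENNReal.ofReal (1 / (1 + R)) by
      rw [ENNReal.ofReal_div_of_pos (by positivity), hcoe 1 zero_le_one]; simp,
      ENNReal.ofReal_eq_ofReal_iff hσ (by positivity)] at hσR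
    subst hσR
    have hp : p ≤ 12 / (2 + R) := by
      rw [le_div_iff₀ (by positivity)]
      field_simp at h
      linarith
    calc ENNReal.ofReal p ≤ ENNReal.ofReal (12 / (2 + R)) := ENNReal.ofReal_le_ofReal hp
      _ = 12 / (2 + R) := by
        rw [ENNReal.ofReal_div_of_pos (by positivity), hcoe 2 zero_le_two]
        simp

/-- Theorem 2.1 (Lyons): the survival probability of Bernoulli(1/2) percolation
on a subtree `T'` of the depth-`n` ternary tree is at most `12 / (2 + R(T'))`,
where `R(T')` is the effective resistance with edge resistances `2 ^ k`. -/
theorem survivalProb_le_of_resist (n : ℕ) (T : List (Fin 3) → Prop)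
    (hT : IsSubtree n T) :
    ENNReal.ofReal (survivalProb n T) ≤ 12 / (2 + resist n T) := by
  have hσ : ENNReal.ofReal (normCond T n []) = 1 / (1 + resist n T) := by
    simpa [resist] using ofReal_normCond T n []
  exact ofReal_le_twelve_div (normCond_nonneg T n []) hσ
    (survivalProb_mul_one_add_normCond_le hT.2.1 n [])
end

section
/- For every sticky map $\sigma: T_n \to C_n$, the set $K_\sigma = \bigcup_{s \in T_n} P_{\sigma,s}$ satisfies $|K_\sigma| \ge c \cdot \frac{\log n}{n}$ for an absolute constant $c > 0$ (for $n \ge 2$). -/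
open MeasureTheory
open scoped ENNReal

/-- The real number `∑ s j / 3^(j+1)` associated to the ternary string `s`. -/
noncomputable def valF {n : ℕ} (s : Fin n → Fin 3) : ℝ :=
  ∑ j : Fin n, (s j : ℝ) / 3 ^ ((j : ℕ) + 1)

/-- A map `σ : T_n → C_n` is sticky if its values have all ternary digits in
`{0, 2}` and the `j`-th digit of `σ s` depends only on the first `j` digits
of `s`. -/
def Sticky {n : ℕ} (σ : (Fin n → Fin 3) → (Fin n → Fin 3)) : Prop :=
  (∀ s j, σ s j ≠ 1) ∧
    ∀ s₁ s₂ : Fin n → Fin 3, ∀ j : Fin n,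
      (∀ i : Fin n, i ≤ j → s₁ i = s₂ i) → σ s₁ j = σ s₂ j

/-- The parallelogram (thin tube) over `0 ≤ x ≤ 1` with `y`-intercept `b`,
slope `v` and vertical thickness `3 ^ (-(n+1))`: its corners are `(0, b)`,
`(0, b + 3^{-(n+1)})`, `(1, b + v)`, `(1, b + v + 3^{-(n+1)})`. -/
def tube (n : ℕ) (b v : ℝ) : Set (ℝ × ℝ) :=
  {p | 0 ≤ p.1 ∧ p.1 ≤ 1 ∧ b + v * p.1 ≤ p.2 ∧
    p.2 ≤ b + v * p.1 + 1 / 3 ^ (n + 1)}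

/-- The parallelogram `P_{σ,s}` with corners `(0, s/3)`, `(0, s/3 + 3^{-(n+1)})`,
`(1, s/3 + σ(s))`, `(1, s/3 + 3^{-(n+1)} + σ(s))`. -/
noncomputable def Ptube {n : ℕ} (σ : (Fin n → Fin 3) → (Fin n → Fin 3))
    (s : Fin n → Fin 3) : Set (ℝ × ℝ) :=
  tube n (valF s / 3) (valF (σ s))

/-- The "Kakeya set" `K_σ` associated to a sticky map `σ`. -/
noncomputable def Kset {n : ℕ} (σ : (Fin n → Fin 3) → (Fin n → Fin 3)) :
    Set (ℝ × ℝ) :=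
  ⋃ s : Fin n → Fin 3, Ptube σ s

/-- The vertical strip `S_j = [3^{-j}, 3^{1-j}] × ℝ`. -/
def strip (j : ℕ) : Set (ℝ × ℝ) :=
  Set.Icc ((3 : ℝ) ^ (-(j : ℤ))) ((3 : ℝ) ^ (1 - (j : ℤ))) ×ˢ Set.univ

/-!
Fix a vertical strip `[X, 3X] × ℝ` with `1/(3n) ≤ X ≤ 1/3`. Every tube meets it in area
`2X·3^{-(n+1)}`, so by Cauchy–Schwarz `|K_σ ∩ strip| ≥ (2X/3)² / ∑_{s,t} |P_s ∩ P_t ∩ strip|`.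
Sort the pairs `(s, t)` by the first digit `l` at which `σ s` and `σ t` differ. The slopes then
differ by about `3^{-l}`, which makes each overlap at most `≈ 3^{l-2n}`; stickiness forces `s`
and `t` to differ among their first `l + 1` digits, so as integers they lie in different blocks
of length `3^{n-l-1}` while being `≲ 3^{n-l} X` apart, and there are only `≲ 3^l (3^{n-l} X)²`
such pairs. Each `l` therefore contributes `O(X²)`, the overlap sum is `O(n X²)`, and
`|K_σ ∩ strip| ≳ 1/n`. The `≈ log₃ n` strips `X = 3^{-j}` overlap only in null sets.
-/

namespace StickyKakeya

section Digits

open Finset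

variable {n : ℕ}

/-- `s` read as a base-3 numeral, most significant digit first. -/
def valN (s : Fin n → Fin 3) : ℕ := finFunctionFinEquiv (s ∘ Fin.rev)

lemma valN_lt (s : Fin n → Fin 3) : valN s < 3 ^ n := (finFunctionFinEquiv _).isLt

lemma valN_injective : Function.Injective (valN : (Fin n → Fin 3) → ℕ) := fun _ _ h =>
  Fin.rev_surjective.injective_comp_right (finFunctionFinEquiv.injective (Fin.ext h))

lemma valN_div_pow_mod (s : Fin n → Fin 3) (j : Fin n) :
    valN s / 3 ^ (n - (j + 1)) % 3 = s j := by
  have := finFunctionFinEquiv_symm_apply_val (finFunctionFinEquiv (s ∘ Fin.rev)) (Fin.rev j)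
  simpa [valN] using this.symm

lemma valN_eq_sum (s : Fin n → Fin 3) : valN s = ∑ j, (s j : ℕ) * 3 ^ (n - (j + 1)) := by
  rw [valN, finFunctionFinEquiv_apply, ← Equiv.sum_comp Fin.revPerm]
  simp

lemma valF_eq_valN_div (s : Fin n → Fin 3) : valF s = valN s / 3 ^ n := by
  rw [valF, valN_eq_sum, Nat.cast_sum, Finset.sum_div]
  refine Finset.sum_congr rfl fun j _ => ?_
  have h : (3 : ℝ) ^ n = 3 ^ (n - (j + 1)) * 3 ^ ((j : ℕ) + 1) := by
    rw [← pow_add]; congr 1; omega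
  rw [h]; push_cast; field_simp

lemma valN_div_pow_ne {s t : Fin n → Fin 3} {l : Fin n} (h : ∃ j ≤ l, s j ≠ t j) :
    valN s / 3 ^ (n - (l + 1)) ≠ valN t / 3 ^ (n - (l + 1)) := by
  obtain ⟨j, hjl, hj⟩ := h
  intro heq
  have hpow : 3 ^ (n - (j + 1)) = 3 ^ (n - (l + 1)) * 3 ^ (l - j : ℕ) := by
    rw [← pow_add]; congr 1; have := l.isLt; have : (j : ℕ) ≤ l := hjl; omega
  refine hj (Fin.ext ?_)
  rw [← valN_div_pow_mod s, ← valN_div_pow_mod t, hpow, ← Nat.div_div_eq_div_mul,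
    ← Nat.div_div_eq_div_mul, heq]

end Digits

section FirstDiff

variable {n : ℕ} {α : Type*} [DecidableEq α]

def firstDiff (u v : Fin n → α) : Option (Fin n) :=
  if h : ∃ j, u j ≠ v j then some (Fin.find _ h) else none

lemma firstDiff_eq_none_iff {u v : Fin n → α} : firstDiff u v = none ↔ u = v := by
  rw [firstDiff, funext_iff]
  split_ifs with h <;> simp_all

lemma firstDiff_eq_some_iff {u v : Fin n → α} {l : Fin n} :
    firstDiff u v = some l ↔ u l ≠ v l ∧ ∀ j < l, u j = v j := by
  rw [firstDiff]
  split_ifs with h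
  · simp [Fin.find_eq_iff]
  · push Not at h; simp [h]

end FirstDiff

section Values

open Finset

variable {n : ℕ}

lemma abs_sum_div_pow_le {f : Fin n → ℝ} (hf : ∀ j, |f j| ≤ 2) {l : Fin n}
    (hl : ∀ j ≤ l, f j = 0) : |∑ j, f j / 3 ^ ((j : ℕ) + 1)| ≤ 1 / 3 ^ ((l : ℕ) + 1) := by
  let g : ℕ → ℝ := fun k => if (l : ℕ) < k then 2 / 3 ^ (k + 1) else 0
  calc |∑ j, f j / 3 ^ ((j : ℕ) + 1)|
      ≤ ∑ j : Fin n, g j := by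
        refine (abs_sum_le_sum_abs _ _).trans (sum_le_sum fun j _ => ?_)
        by_cases hj : j ≤ l
        · simp only [hl j hj, zero_div, abs_zero, g]
          split_ifs <;> positivity
        · rw [show g j = _ from if_pos (Fin.lt_def.mp (not_le.mp hj)), abs_div,
            abs_of_pos (by positivity : (0 : ℝ) < 3 ^ ((j : ℕ) + 1))]
          gcongr
          exact hf j
    _ = ∑ k ∈ Ico ((l : ℕ) + 1) n, 2 / 3 * (1 / 3 : ℝ) ^ k := by
        rw [Fin.sum_univ_eq_sum_range g, ← sum_filter]
        refine sum_congr ?_ fun k _ => ?_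
        · ext k; simp only [mem_filter, mem_range, mem_Ico]; omega
        · rw [one_div_pow]; field_simp; ring
    _ ≤ 2 / 3 * ((1 / 3 : ℝ) ^ ((l : ℕ) + 1) / (1 - 1 / 3)) := by
        rw [← mul_sum]; gcongr; exact geom_sum_Ico_le_of_lt_one (by norm_num) (by norm_num)
    _ = 1 / 3 ^ ((l : ℕ) + 1) := by rw [one_div_pow]; field_simp; ring

lemma abs_digit_sub_le (a b : Fin 3) : |(a : ℝ) - b| ≤ 2 := by
  fin_cases a <;> fin_cases b <;> norm_num

lemma abs_valF_sub_sub_le {u v : Fin n → Fin 3} {l : Fin n}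
    (h : firstDiff u v = some l) :
    |valF u - valF v - ((u l : ℝ) - v l) / 3 ^ ((l : ℕ) + 1)| ≤ 1 / 3 ^ ((l : ℕ) + 1) := by
  have hagree := (firstDiff_eq_some_iff.mp h).2
  let f : Fin n → ℝ := fun j => if j = l then 0 else (u j : ℝ) - v j
  have hsum : valF u - valF v - ((u l : ℝ) - v l) / 3 ^ ((l : ℕ) + 1) =
      ∑ j, f j / 3 ^ ((j : ℕ) + 1) := by
    have hf : ∀ j, f j / 3 ^ ((j : ℕ) + 1) = ((u j : ℝ) - v j) / 3 ^ ((j : ℕ) + 1) -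
        if j = l then ((u l : ℝ) - v l) / 3 ^ ((l : ℕ) + 1) else 0 := fun j => by
      simp only [f]; split_ifs with hj <;> simp [hj]
    simp only [hf, sum_sub_distrib, sum_ite_eq', mem_univ, if_true, valF, sub_div]
  rw [hsum]
  refine abs_sum_div_pow_le (fun j => ?_) (fun j hj => ?_)
  · simp only [f]
    split_ifs
    · simp
    · exact abs_digit_sub_le _ _
  · simp only [f]
    split_ifs with hjl
    · rfl
    · simp [hagree j (lt_of_le_of_ne hj hjl)]

lemma abs_valF_sub_le_of_firstDiff {u v : Fin n → Fin 3} {l : Fin n}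
    (h : firstDiff u v = some l) : |valF u - valF v| ≤ 1 / 3 ^ (l : ℕ) := by
  have hd : |((u l : ℝ) - v l) / 3 ^ ((l : ℕ) + 1)| ≤ 2 / 3 ^ ((l : ℕ) + 1) := by
    rw [abs_div, abs_of_pos (by positivity : (0 : ℝ) < 3 ^ ((l : ℕ) + 1))]
    gcongr
    exact abs_digit_sub_le _ _
  have h3 : (1 : ℝ) / 3 ^ ((l : ℕ) + 1) + 2 / 3 ^ ((l : ℕ) + 1) = 1 / 3 ^ (l : ℕ) := by
    rw [pow_succ]; field_simp; norm_num
  linarith [abs_sub_abs_le_abs_sub (valF u - valF v) (((u l : ℝ) - v l) / 3 ^ ((l : ℕ) + 1)),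
    abs_valF_sub_sub_le h]

lemma abs_digit_sub_eq_two {a b : Fin 3} (ha : a ≠ 1) (hb : b ≠ 1) (hab : a ≠ b) :
    |(a : ℝ) - b| = 2 := by
  fin_cases a <;> fin_cases b <;> simp_all

lemma le_abs_valF_sub_of_firstDiff {u v : Fin n → Fin 3} (hu : ∀ j, u j ≠ 1) (hv : ∀ j, v j ≠ 1)
    {l : Fin n} (h : firstDiff u v = some l) : 1 / 3 ^ ((l : ℕ) + 1) ≤ |valF u - valF v| := by
  have hd : |((u l : ℝ) - v l) / 3 ^ ((l : ℕ) + 1)| = 2 / 3 ^ ((l : ℕ) + 1) := by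
    rw [abs_div, abs_of_pos (by positivity : (0 : ℝ) < 3 ^ ((l : ℕ) + 1)),
      abs_digit_sub_eq_two (hu l) (hv l) (firstDiff_eq_some_iff.mp h).1]
  linarith [abs_sub_abs_le_abs_sub (((u l : ℝ) - v l) / 3 ^ ((l : ℕ) + 1)) (valF u - valF v),
    abs_sub_comm (((u l : ℝ) - v l) / 3 ^ ((l : ℕ) + 1)) (valF u - valF v),
    abs_valF_sub_sub_le h, (by ring : (2 : ℝ) / 3 ^ ((l : ℕ) + 1) = 2 * (1 / 3 ^ ((l : ℕ) + 1)))]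

end Values

lemma _root_.Sticky.exists_ne_of_firstDiff {n : ℕ} {σ : (Fin n → Fin 3) → (Fin n → Fin 3)}
    (hσ : Sticky σ) {s t : Fin n → Fin 3} {l : Fin n} (h : firstDiff (σ s) (σ t) = some l) :
    ∃ j ≤ l, s j ≠ t j := by
  by_contra! hst
  exact (firstDiff_eq_some_iff.mp h).1 (hσ.2 s t l hst)

section Counting

open Finset

lemma card_le_of_close (N ρ : ℕ) {T : Finset (ℕ × ℕ)}
    (hT : ∀ p ∈ T, p.1 < N ∧ p.2 ≤ p.1 + ρ ∧ p.1 ≤ p.2 + ρ) : #T ≤ N * (2 * ρ + 1) := by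
  classical
  have hsub : T ⊆ (range N).biUnion fun a => {a} ×ˢ Icc (a - ρ) (a + ρ) := by
    intro p hp
    obtain ⟨h1, h2, h3⟩ := hT p hp
    simp only [mem_biUnion, mem_range, mem_product, mem_singleton, mem_Icc]
    exact ⟨p.1, h1, rfl, by omega, h2⟩
  refine (card_le_card hsub).trans
    ((card_biUnion_le_card_mul _ _ _ fun a _ => ?_).trans_eq (by rw [card_range]))
  simp only [card_product, card_singleton, one_mul, Nat.card_Icc]
  omega

/-- Such a pair straddles one of the `Q` block boundaries `(q + 1) * M`, with both entries
within `ρ` of it. -/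
lemma card_le_of_close_of_div_ne (Q M ρ : ℕ) {T : Finset (ℕ × ℕ)}
    (hT : ∀ p ∈ T, p.1 < Q * M ∧ p.2 < Q * M ∧ p.1 / M ≠ p.2 / M ∧
      p.2 ≤ p.1 + ρ ∧ p.1 ≤ p.2 + ρ) :
    #T ≤ Q * (2 * ρ) ^ 2 := by
  classical
  let near (q : ℕ) : Finset ℕ := Ico ((q + 1) * M - ρ) ((q + 1) * M + ρ)
  have hnear : ∀ a b, a ≤ b → a / M ≠ b / M → b ≤ a + ρ → a ∈ near (a / M) ∧ b ∈ near (a / M) := by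
    intro a b hab hdiv hclose
    have hM : 0 < M := Nat.pos_of_ne_zero fun h => hdiv (by simp [h])
    have ha : a < (a / M + 1) * M := Nat.lt_mul_of_div_lt (Nat.lt_succ_self _) hM
    have hb : (a / M + 1) * M ≤ b :=
      (Nat.le_div_iff_mul_le hM).mp (lt_of_le_of_ne (Nat.div_le_div_right hab) hdiv)
    simp only [near, mem_Ico]
    omega
  have hsub : T ⊆ (range Q).biUnion fun q => near q ×ˢ near q := by
    intro p hp
    obtain ⟨h1, h2, hdiv, h3, h4⟩ := hT p hp
    have hM : 0 < M := Nat.pos_of_ne_zero fun h => hdiv (by simp [h])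
    simp only [mem_biUnion, mem_range, mem_product]
    rcases le_total p.1 p.2 with h | h
    · exact ⟨p.1 / M, (Nat.div_lt_iff_lt_mul hM).mpr h1, hnear _ _ h hdiv h3⟩
    · exact ⟨p.2 / M, (Nat.div_lt_iff_lt_mul hM).mpr h2, (hnear _ _ h hdiv.symm h4).symm⟩
  refine (card_le_card hsub).trans
    ((card_biUnion_le_card_mul _ _ _ fun q _ => ?_).trans_eq (by rw [card_range]))
  have hcard : #(near q) ≤ 2 * ρ := by simp only [near, Nat.card_Ico]; omega
  rw [card_product, sq]
  exact Nat.mul_le_mul hcard hcard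

end Counting

section Measure

open Set

variable {α β : Type*} [MeasurableSpace α] [MeasurableSpace β]

lemma measure_prod_le_mul_of_slice_le {μ : Measure α} {ν : Measure β} [SFinite ν]
    {A : Set (α × β)} (hA : MeasurableSet A) {E : Set α} {c : ℝ≥0∞}
    (hE : ∀ x, (Prod.mk x ⁻¹' A).Nonempty → x ∈ E) (hc : ∀ x ∈ E, ν (Prod.mk x ⁻¹' A) ≤ c) :
    μ.prod ν A ≤ c * μ E := by
  rw [Measure.prod_apply hA]
  refine (lintegral_mono fun x => ?_).trans (lintegral_indicator_const_le E c)
  by_cases hx : x ∈ E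
  · rw [indicator_of_mem hx]; exact hc x hx
  · rw [not_nonempty_iff_eq_empty.mp (mt (hE x) hx), measure_empty]; exact zero_le

lemma sq_lintegral_le_mul_lintegral_sq (μ : Measure α) {f : α → ℝ≥0∞} (hf : AEMeasurable f μ)
    {U : Set α} (hU : MeasurableSet U) (hfU : ∀ x ∉ U, f x = 0) :
    (∫⁻ x, f x ∂μ) ^ 2 ≤ μ U * ∫⁻ x, f x ^ 2 ∂μ := by
  have hfU' : f * U.indicator 1 = f := by
    ext x
    by_cases hx : x ∈ U <;> simp [hx, hfU]
  have hU2 : ∫⁻ x, U.indicator 1 x ^ (2 : ℝ) ∂μ = μ U := by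
    have : ∀ x, U.indicator (1 : α → ℝ≥0∞) x ^ (2 : ℝ) = U.indicator 1 x := fun x => by
      by_cases hx : x ∈ U <;> simp [hx]
    simp_rw [this, lintegral_indicator_one hU]
  have holder := ENNReal.lintegral_mul_le_Lp_mul_Lq μ Real.HolderConjugate.two_two
    hf (measurable_one.indicator hU).aemeasurable
  simp_rw [hfU', hU2, ENNReal.rpow_two] at holder
  calc (∫⁻ x, f x ∂μ) ^ 2
      ≤ ((∫⁻ x, f x ^ 2 ∂μ) ^ (1 / 2 : ℝ)) ^ (2 : ℝ) * ((μ U) ^ (1 / 2 : ℝ)) ^ (2 : ℝ) := by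
        rw [← ENNReal.mul_rpow_of_nonneg _ _ zero_le_two, ENNReal.rpow_two]
        gcongr
    _ = μ U * ∫⁻ x, f x ^ 2 ∂μ := by
        rw [one_div, ENNReal.rpow_inv_rpow two_ne_zero, ENNReal.rpow_inv_rpow two_ne_zero,
          mul_comm]

lemma sq_sum_measure_le {ι : Type*} [Fintype ι] (μ : Measure α) {A : ι → Set α}
    (hA : ∀ i, MeasurableSet (A i)) {U : Set α} (hU : MeasurableSet U) (hAU : ∀ i, A i ⊆ U) :
    (∑ i, μ (A i)) ^ 2 ≤ μ U * ∑ p : ι × ι, μ (A p.1 ∩ A p.2) := by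
  have hsq : ∀ x, (∑ i, (A i).indicator (1 : α → ℝ≥0∞) x) ^ 2 =
      ∑ p : ι × ι, (A p.1 ∩ A p.2).indicator 1 x := fun x => by
    simp only [sq, Finset.sum_mul_sum, ← Finset.sum_product', Finset.univ_product_univ,
      inter_indicator_one, Pi.mul_apply]
  have h := sq_lintegral_le_mul_lintegral_sq μ (f := fun x => ∑ i, (A i).indicator 1 x)
    (Finset.measurable_sum _ fun i _ => measurable_one.indicator (hA i)).aemeasurable hU
    fun x hx => Finset.sum_eq_zero fun i _ => indicator_of_notMem (fun hi => hx (hAU i hi)) _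
  simp_rw [hsq] at h
  rwa [lintegral_finsetSum _ fun i _ => measurable_one.indicator (hA i),
    lintegral_finsetSum _ fun p _ => measurable_one.indicator ((hA p.1).inter (hA p.2)),
    Finset.sum_congr rfl fun i _ => lintegral_indicator_one (hA i),
    Finset.sum_congr rfl fun p _ => lintegral_indicator_one ((hA p.1).inter (hA p.2))] at h

end Measure

section Tubes

open Set

variable {n : ℕ}

lemma isClosed_tube (n : ℕ) (b v : ℝ) : IsClosed (tube n b v) := by
  simp only [tube, ofPred_and]
  apply_rules [IsClosed.inter, isClosed_le] <;> fun_prop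

lemma measurableSet_tube (n : ℕ) (b v : ℝ) : MeasurableSet (tube n b v) :=
  (isClosed_tube n b v).measurableSet

lemma le_volume_tube_inter {I : Set ℝ} (hI : MeasurableSet I) (hI01 : I ⊆ Icc 0 1) (b v : ℝ) :
    ENNReal.ofReal (1 / 3 ^ (n + 1)) * volume I ≤ volume (tube n b v ∩ I ×ˢ univ) := by
  have hsub : regionBetween (fun x => b + v * x) (fun x => b + v * x + 1 / 3 ^ (n + 1)) I ⊆
      tube n b v ∩ I ×ˢ univ := fun p ⟨hx, hy⟩ =>
    ⟨⟨(hI01 hx).1, (hI01 hx).2, hy.1.le, hy.2.le⟩, hx, mem_univ _⟩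
  refine le_trans ?_ (measure_mono hsub)
  rw [Measure.volume_eq_prod, volume_regionBetween_eq_lintegral' (by fun_prop) (by fun_prop) hI]
  simp

lemma volume_tube_inter_tube_le {I : Set ℝ} (hI : MeasurableSet I) (b₁ v₁ b₂ v₂ : ℝ) :
    volume (tube n b₁ v₁ ∩ tube n b₂ v₂ ∩ I ×ˢ univ) ≤ ENNReal.ofReal (1 / 3 ^ (n + 1)) *
      volume {x ∈ I | |b₂ - b₁ + (v₂ - v₁) * x| ≤ 1 / 3 ^ (n + 1)} := by
  rw [Measure.volume_eq_prod]
  refine measure_prod_le_mul_of_slice_le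
    (((measurableSet_tube n _ _).inter (measurableSet_tube n _ _)).inter (hI.prod .univ))
    (fun x ⟨y, ⟨⟨⟨_, _, h₁, h₁'⟩, ⟨_, _, h₂, h₂'⟩⟩, hx, _⟩⟩ =>
      ⟨hx, abs_le.mpr ⟨by linarith, by linarith⟩⟩) fun x _ => ?_
  calc volume (Prod.mk x ⁻¹' (tube n b₁ v₁ ∩ tube n b₂ v₂ ∩ I ×ˢ univ))
      ≤ volume (Icc (b₁ + v₁ * x) (b₁ + v₁ * x + 1 / 3 ^ (n + 1))) :=
        measure_mono fun y ⟨⟨h₁, _⟩, _⟩ => ⟨h₁.2.2.1, h₁.2.2.2⟩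
    _ = ENNReal.ofReal (1 / 3 ^ (n + 1)) := by rw [Real.volume_Icc, add_sub_cancel_left]

lemma volume_setOf_abs_add_mul_le_le (c : ℝ) {d : ℝ} (hd : d ≠ 0) (δ : ℝ) :
    volume {x : ℝ | |c + d * x| ≤ δ} ≤ ENNReal.ofReal (2 * δ / |d|) := by
  refine (Real.volume_le_diam _).trans (Metric.ediam_le fun x hx y hy => ?_)
  rw [edist_dist, Real.dist_eq]
  refine ENNReal.ofReal_le_ofReal ((le_div_iff₀ (abs_pos.mpr hd)).mpr ?_)
  calc |x - y| * |d| = |(c + d * x) - (c + d * y)| := by rw [← abs_mul]; ring_nf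
    _ ≤ 2 * δ := by
        have := abs_sub (c + d * x) (c + d * y)
        simp only [mem_ofPred_eq] at hx hy
        linarith

end Tubes

section Overlap

open Set

variable {n : ℕ} (σ : (Fin n → Fin 3) → (Fin n → Fin 3)) (X : ℝ)

noncomputable def overlap (p : (Fin n → Fin 3) × (Fin n → Fin 3)) : ℝ≥0∞ :=
  volume (Ptube σ p.1 ∩ Ptube σ p.2 ∩ Icc X (3 * X) ×ˢ univ)

variable {σ X}

lemma overlap_le_mul_volume (p : (Fin n → Fin 3) × (Fin n → Fin 3)) :
    overlap σ X p ≤ ENNReal.ofReal (1 / 3 ^ (n + 1)) * volume {x ∈ Icc X (3 * X) |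
      |valF p.2 / 3 - valF p.1 / 3 + (valF (σ p.2) - valF (σ p.1)) * x| ≤ 1 / 3 ^ (n + 1)} :=
  volume_tube_inter_tube_le measurableSet_Icc _ _ _ _

lemma overlap_le (p : (Fin n → Fin 3) × (Fin n → Fin 3)) :
    overlap σ X p ≤ ENNReal.ofReal (2 * X / 3 ^ (n + 1)) := by
  refine (overlap_le_mul_volume p).trans ?_
  calc _ ≤ ENNReal.ofReal (1 / 3 ^ (n + 1)) * volume (Icc X (3 * X)) := by
        gcongr; exact sep_subset _ _
    _ = ENNReal.ofReal (2 * X / 3 ^ (n + 1)) := by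
        rw [Real.volume_Icc, ← ENNReal.ofReal_mul (by positivity)]; ring_nf

lemma overlap_le_of_firstDiff (hσ : Sticky σ) {p : (Fin n → Fin 3) × (Fin n → Fin 3)}
    {l : Fin n} (hl : firstDiff (σ p.1) (σ p.2) = some l) :
    overlap σ X p ≤ ENNReal.ofReal (2 * 3 ^ ((l : ℕ) + 1) / (3 ^ (n + 1)) ^ 2) := by
  have hslope := le_abs_valF_sub_of_firstDiff (hσ.1 p.1) (hσ.1 p.2) hl
  rw [abs_sub_comm] at hslope
  have hd : valF (σ p.2) - valF (σ p.1) ≠ 0 := fun h => by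
    rw [h, abs_zero] at hslope; linarith [show (0 : ℝ) < 1 / 3 ^ ((l : ℕ) + 1) by positivity]
  refine (overlap_le_mul_volume p).trans ?_
  calc _ ≤ ENNReal.ofReal (1 / 3 ^ (n + 1)) *
        ENNReal.ofReal (2 * (1 / 3 ^ (n + 1)) / |valF (σ p.2) - valF (σ p.1)|) := by
        gcongr
        exact (measure_mono fun x hx => hx.2).trans (volume_setOf_abs_add_mul_le_le _ hd _)
    _ ≤ ENNReal.ofReal (1 / 3 ^ (n + 1)) *
        ENNReal.ofReal (2 * (1 / 3 ^ (n + 1)) / (1 / 3 ^ ((l : ℕ) + 1))) := by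
        gcongr
    _ = ENNReal.ofReal (2 * 3 ^ ((l : ℕ) + 1) / (3 ^ (n + 1)) ^ 2) := by
        rw [← ENNReal.ofReal_mul (by positivity)]; congr 1; field_simp

/-- Tubes meeting over `[X, 3X]` have base points within the thickness plus the drift of the
slope difference over that interval. -/
lemma abs_valN_sub_le_of_overlap_ne_zero {p : (Fin n → Fin 3) × (Fin n → Fin 3)}
    (hp : overlap σ X p ≠ 0) :
    |(valN p.2 : ℝ) - valN p.1| ≤ 1 + 3 ^ (n + 2) * X * |valF (σ p.2) - valF (σ p.1)| := by
  obtain ⟨x, ⟨hXx, hx3X⟩, hx⟩ := nonempty_of_measure_ne_zero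
    (right_ne_zero_of_mul ((overlap_le_mul_volume p).trans_lt' (pos_iff_ne_zero.mpr hp)).ne')
  set d := valF (σ p.2) - valF (σ p.1)
  set A := valF p.2 / 3 - valF p.1 / 3 + d * x
  have hdx : |d * x| ≤ 3 * X * |d| := by
    rw [abs_mul, abs_of_nonneg (by linarith : 0 ≤ x), mul_comm]
    gcongr
  have hA : (valN p.2 : ℝ) - valN p.1 = 3 ^ (n + 1) * (A - d * x) := by
    simp only [A, valF_eq_valN_div]; field_simp; ring
  calc |(valN p.2 : ℝ) - valN p.1| = 3 ^ (n + 1) * |A - d * x| := by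
        rw [hA, abs_mul, abs_of_pos (by positivity)]
    _ ≤ 3 ^ (n + 1) * (1 / 3 ^ (n + 1) + 3 * X * |d|) := by
        gcongr; linarith [abs_sub A (d * x)]
    _ = 1 + 3 ^ (n + 2) * X * |d| := by field_simp; ring

end Overlap

section FiberCounts

open Finset

variable {n : ℕ} {σ : (Fin n → Fin 3) → (Fin n → Fin 3)} {X : ℝ}

lemma le_add_ceil_of_abs_sub_le {a b : ℕ} {R : ℝ} (h : |(b : ℝ) - a| ≤ R) :
    b ≤ a + ⌈R⌉₊ ∧ a ≤ b + ⌈R⌉₊ := by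
  have hR := abs_le.mp h
  have hc := Nat.le_ceil R
  have h₁ : (b : ℝ) ≤ a + ⌈R⌉₊ := by linarith
  have h₂ : (a : ℝ) ≤ b + ⌈R⌉₊ := by linarith
  exact ⟨by exact_mod_cast h₁, by exact_mod_cast h₂⟩

lemma card_le_of_eq_of_overlap_ne_zero (P : Finset ((Fin n → Fin 3) × (Fin n → Fin 3)))
    (hP : ∀ p ∈ P, σ p.1 = σ p.2 ∧ overlap σ X p ≠ 0) : #P ≤ 3 ^ n * 3 := by
  let f (p : (Fin n → Fin 3) × (Fin n → Fin 3)) : ℕ × ℕ := (valN p.1, valN p.2)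
  have hf : Set.InjOn f P := fun p _ q _ h =>
    Prod.ext (valN_injective (Prod.ext_iff.mp h).1) (valN_injective (Prod.ext_iff.mp h).2)
  rw [← card_image_of_injOn hf]
  refine card_le_of_close (3 ^ n) 1 fun q hq => ?_
  obtain ⟨p, hp, rfl⟩ := mem_image.mp hq
  obtain ⟨hσp, hne⟩ := hP p hp
  have h := abs_valN_sub_le_of_overlap_ne_zero hne
  rw [hσp, sub_self, abs_zero, mul_zero, add_zero] at h
  have := le_add_ceil_of_abs_sub_le h
  rw [Nat.ceil_one] at this
  exact ⟨valN_lt p.1, this⟩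

lemma card_le_of_firstDiff_of_overlap_ne_zero (hσ : Sticky σ) (hX : 0 ≤ X) {l : Fin n}
    (P : Finset ((Fin n → Fin 3) × (Fin n → Fin 3)))
    (hP : ∀ p ∈ P, firstDiff (σ p.1) (σ p.2) = some l ∧ overlap σ X p ≠ 0) :
    #P ≤ 3 ^ ((l : ℕ) + 1) * (2 * ⌈1 + 3 ^ (n + 2) * X / 3 ^ (l : ℕ)⌉₊) ^ 2 := by
  let f (p : (Fin n → Fin 3) × (Fin n → Fin 3)) : ℕ × ℕ := (valN p.1, valN p.2)
  have hf : Set.InjOn f P := fun p _ q _ h =>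
    Prod.ext (valN_injective (Prod.ext_iff.mp h).1) (valN_injective (Prod.ext_iff.mp h).2)
  have hQM : 3 ^ ((l : ℕ) + 1) * 3 ^ (n - ((l : ℕ) + 1)) = 3 ^ n := by
    rw [← pow_add]; congr 1; have := l.isLt; omega
  rw [← card_image_of_injOn hf]
  refine card_le_of_close_of_div_ne _ (3 ^ (n - ((l : ℕ) + 1))) _ fun q hq => ?_
  obtain ⟨p, hp, rfl⟩ := mem_image.mp hq
  obtain ⟨hl, hne⟩ := hP p hp
  have hclose : |(valN p.2 : ℝ) - valN p.1| ≤ 1 + 3 ^ (n + 2) * X / 3 ^ (l : ℕ) := by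
    refine (abs_valN_sub_le_of_overlap_ne_zero hne).trans ?_
    rw [div_eq_mul_one_div (3 ^ (n + 2) * X)]
    gcongr
    rw [abs_sub_comm]
    exact abs_valF_sub_le_of_firstDiff hl
  rw [hQM]
  exact ⟨valN_lt p.1, valN_lt p.2, valN_div_pow_ne (hσ.exists_ne_of_firstDiff hl),
    le_add_ceil_of_abs_sub_le hclose⟩

end FiberCounts

section FiberSums

open Finset

variable {n : ℕ} {σ : (Fin n → Fin 3) → (Fin n → Fin 3)} {X : ℝ}

lemma sum_overlap_le_of_eq (P : Finset ((Fin n → Fin 3) × (Fin n → Fin 3)))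
    (hP : ∀ p ∈ P, σ p.1 = σ p.2) : ∑ p ∈ P, overlap σ X p ≤ ENNReal.ofReal (2 * X) := by
  classical
  have hcard := card_le_of_eq_of_overlap_ne_zero {p ∈ P | overlap σ X p ≠ 0}
    fun p hp => ⟨hP p (mem_filter.mp hp).1, (mem_filter.mp hp).2⟩
  calc ∑ p ∈ P, overlap σ X p = ∑ p ∈ P with overlap σ X p ≠ 0, overlap σ X p :=
        (sum_filter_ne_zero _).symm
    _ ≤ #{p ∈ P | overlap σ X p ≠ 0} • ENNReal.ofReal (2 * X / 3 ^ (n + 1)) :=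
        sum_le_card_nsmul _ _ _ fun p _ => overlap_le p
    _ ≤ ((3 ^ n * 3 : ℕ) : ℝ≥0∞) * ENNReal.ofReal (2 * X / 3 ^ (n + 1)) := by
        rw [nsmul_eq_mul]; gcongr
    _ = ENNReal.ofReal (2 * X) := by
        rw [← ENNReal.ofReal_natCast, ← ENNReal.ofReal_mul (by positivity)]
        congr 1; push_cast; field_simp; ring

lemma sq_two_mul_ceil_le {A : ℝ} (hA : 0 ≤ A) : (2 * (⌈1 + A⌉₊ : ℝ)) ^ 2 ≤ 32 + 8 * A ^ 2 := by
  have hρ : (⌈1 + A⌉₊ : ℝ) ≤ 2 + A := by linarith [Nat.ceil_lt_add_one (by positivity : 0 ≤ 1 + A)]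
  have : (⌈1 + A⌉₊ : ℝ) * ⌈1 + A⌉₊ ≤ (2 + A) * (2 + A) := mul_self_le_mul_self (by positivity) hρ
  nlinarith [sq_nonneg (A - 2)]

lemma sum_overlap_le_of_firstDiff (hσ : Sticky σ) (hX : 0 ≤ X) {l : Fin n}
    (P : Finset ((Fin n → Fin 3) × (Fin n → Fin 3)))
    (hP : ∀ p ∈ P, firstDiff (σ p.1) (σ p.2) = some l) :
    ∑ p ∈ P, overlap σ X p ≤
      ENNReal.ofReal (1296 * X ^ 2 + 64 * X * 3 ^ (l : ℕ) / 3 ^ n) := by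
  classical
  set m := min (2 * X / 3 ^ (n + 1)) (2 * 3 ^ ((l : ℕ) + 1) / (3 ^ (n + 1)) ^ 2)
  set ρ := ⌈1 + 3 ^ (n + 2) * X / 3 ^ (l : ℕ)⌉₊
  have hcard := card_le_of_firstDiff_of_overlap_ne_zero hσ hX {p ∈ P | overlap σ X p ≠ 0}
    fun p hp => ⟨hP p (mem_filter.mp hp).1, (mem_filter.mp hp).2⟩
  calc ∑ p ∈ P, overlap σ X p = ∑ p ∈ P with overlap σ X p ≠ 0, overlap σ X p :=
        (sum_filter_ne_zero _).symm
    _ ≤ #{p ∈ P | overlap σ X p ≠ 0} • ENNReal.ofReal m :=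
        sum_le_card_nsmul _ _ _ fun p hp => by
          rw [ENNReal.ofReal_min]
          exact le_min (overlap_le p) (overlap_le_of_firstDiff hσ (hP p (mem_filter.mp hp).1))
    _ ≤ ((3 ^ ((l : ℕ) + 1) * (2 * ρ) ^ 2 : ℕ) : ℝ≥0∞) * ENNReal.ofReal m := by
        rw [nsmul_eq_mul]; gcongr
    _ = ENNReal.ofReal (3 ^ ((l : ℕ) + 1) * (2 * ρ) ^ 2 * m) := by
        rw [← ENNReal.ofReal_natCast, ← ENNReal.ofReal_mul (by positivity)]; push_cast; rfl
    _ ≤ _ := by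
        refine ENNReal.ofReal_le_ofReal ?_
        set A := 3 ^ (n + 2) * X / 3 ^ (l : ℕ)
        have e₁ : (3 : ℝ) ^ ((l : ℕ) + 1) * 32 * (2 * X / 3 ^ (n + 1)) =
            64 * X * 3 ^ (l : ℕ) / 3 ^ n := by
          rw [pow_succ, pow_succ]; field_simp; ring
        have e₂ : (3 : ℝ) ^ ((l : ℕ) + 1) * (8 * A ^ 2) *
            (2 * 3 ^ ((l : ℕ) + 1) / (3 ^ (n + 1)) ^ 2) = 1296 * X ^ 2 := by
          simp only [A, pow_succ]; field_simp; ring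
        -- the constant part of `(2ρ)²` is paired with the width bound `2X`, the `A²` part with
        -- the slope bound
        calc (3 : ℝ) ^ ((l : ℕ) + 1) * (2 * ρ) ^ 2 * m
            ≤ 3 ^ ((l : ℕ) + 1) * (32 + 8 * A ^ 2) * m := by
              gcongr; exact sq_two_mul_ceil_le (by positivity)
          _ = 3 ^ ((l : ℕ) + 1) * 32 * m + 3 ^ ((l : ℕ) + 1) * (8 * A ^ 2) * m := by ring
          _ ≤ 3 ^ ((l : ℕ) + 1) * 32 * (2 * X / 3 ^ (n + 1)) +
              3 ^ ((l : ℕ) + 1) * (8 * A ^ 2) * (2 * 3 ^ ((l : ℕ) + 1) / (3 ^ (n + 1)) ^ 2) := by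
            gcongr
            · exact min_le_left _ _
            · exact min_le_right _ _
          _ = _ := by rw [e₁, e₂]; ring

end FiberSums

section StripEstimate

open Finset Set

variable {n : ℕ} {σ : (Fin n → Fin 3) → (Fin n → Fin 3)} {X : ℝ}

lemma sum_overlap_le (hσ : Sticky σ) (hX : 0 ≤ X) :
    ∑ p, overlap σ X p ≤ ENNReal.ofReal (1296 * n * X ^ 2 + 34 * X) := by
  classical
  rw [← sum_fiberwise univ (fun p => firstDiff (σ p.1) (σ p.2)) (overlap σ X),
    Fintype.sum_option]
  have hgeom : ∑ l : Fin n, (3 : ℝ) ^ (l : ℕ) ≤ 3 ^ n / 2 := by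
    rw [Fin.sum_univ_eq_sum_range (fun l => (3 : ℝ) ^ l), geom_sum_eq (by norm_num)]
    linarith
  calc _ ≤ ENNReal.ofReal (2 * X) +
        ∑ l : Fin n, ENNReal.ofReal (1296 * X ^ 2 + 64 * X * 3 ^ (l : ℕ) / 3 ^ n) := by
        gcongr with l
        · exact sum_overlap_le_of_eq _ fun p hp =>
            firstDiff_eq_none_iff.mp (mem_filter.mp hp).2
        · exact sum_overlap_le_of_firstDiff hσ hX _ fun p hp => (mem_filter.mp hp).2
    _ = ENNReal.ofReal (2 * X + ∑ l : Fin n, (1296 * X ^ 2 + 64 * X * 3 ^ (l : ℕ) / 3 ^ n)) := by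
        rw [ENNReal.ofReal_add (by positivity) (by positivity),
          ENNReal.ofReal_sum_of_nonneg fun l _ => by positivity]
    _ ≤ _ := by
        refine ENNReal.ofReal_le_ofReal ?_
        rw [sum_add_distrib, sum_const, card_univ, Fintype.card_fin, nsmul_eq_mul,
          ← sum_div, ← mul_sum]
        have : 64 * X * (∑ l : Fin n, (3 : ℝ) ^ (l : ℕ)) / 3 ^ n ≤ 32 * X := by
          rw [div_le_iff₀ (by positivity)]
          nlinarith
        linarith

lemma measurableSet_Kset (σ : (Fin n → Fin 3) → (Fin n → Fin 3)) : MeasurableSet (Kset σ) :=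
  MeasurableSet.iUnion fun _ => measurableSet_tube _ _ _

theorem le_volume_Kset_inter (hσ : Sticky σ) (h3X : 3 * X ≤ 1) (hnX : 1 ≤ 3 * n * X) :
    ENNReal.ofReal (1 / (3200 * n)) ≤ volume (Kset σ ∩ Icc X (3 * X) ×ˢ univ) := by
  have hX : 0 < X := by nlinarith [(n.cast_nonneg : (0 : ℝ) ≤ n)]
  have hn : (0 : ℝ) < n := by nlinarith
  have hS : MeasurableSet (Icc X (3 * X) ×ˢ (univ : Set ℝ)) := measurableSet_Icc.prod .univ
  have hCS := sq_sum_measure_le volume (A := fun s => Ptube σ s ∩ Icc X (3 * X) ×ˢ univ)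
    (fun s => (measurableSet_tube _ _ _).inter hS) ((measurableSet_Kset σ).inter hS)
    (fun s => inter_subset_inter_left _ (subset_iUnion (Ptube σ) s))
  simp_rw [← inter_inter_distrib_right] at hCS
  have hsingle : ENNReal.ofReal (2 * X / 3) ≤ ∑ s, volume (Ptube σ s ∩ Icc X (3 * X) ×ˢ univ) :=
    calc ENNReal.ofReal (2 * X / 3)
        = ∑ _s : Fin n → Fin 3, ENNReal.ofReal (1 / 3 ^ (n + 1)) * volume (Icc X (3 * X)) := by
          rw [sum_const, card_univ, Fintype.card_fun, Fintype.card_fin, Fintype.card_fin,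
            Real.volume_Icc, ← ENNReal.ofReal_mul (by positivity), nsmul_eq_mul,
            ← ENNReal.ofReal_natCast, ← ENNReal.ofReal_mul (by positivity)]
          congr 1; push_cast; field_simp; ring
      _ ≤ _ := sum_le_sum fun s _ =>
          le_volume_tube_inter measurableSet_Icc (Icc_subset_Icc hX.le h3X) _ _
  have hpairs : ∑ p, overlap σ X p ≤ ENNReal.ofReal (1398 * n * X ^ 2) :=
    (sum_overlap_le hσ hX.le).trans (ENNReal.ofReal_le_ofReal (by nlinarith))
  have key : ENNReal.ofReal ((2 * X / 3) ^ 2) ≤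
      volume (Kset σ ∩ Icc X (3 * X) ×ˢ univ) * ENNReal.ofReal (1398 * n * X ^ 2) := by
    rw [ENNReal.ofReal_pow (by positivity)]
    calc _ ≤ (∑ s, volume (Ptube σ s ∩ Icc X (3 * X) ×ˢ univ)) ^ 2 := by gcongr
      _ ≤ _ := hCS
      _ ≤ _ := by gcongr; exact hpairs
  calc ENNReal.ofReal (1 / (3200 * n))
      ≤ ENNReal.ofReal ((2 * X / 3) ^ 2 / (1398 * n * X ^ 2)) := by
        refine ENNReal.ofReal_le_ofReal ?_
        rw [div_le_div_iff₀ (by positivity) (by positivity)]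
        nlinarith [sq_nonneg X, mul_pos hn (pow_pos hX 2)]
    _ = ENNReal.ofReal ((2 * X / 3) ^ 2) / ENNReal.ofReal (1398 * n * X ^ 2) :=
        ENNReal.ofReal_div_of_pos (by positivity)
    _ ≤ _ := ENNReal.div_le_of_le_mul key

end StripEstimate

section Strips

open Set

lemma measurableSet_strip (j : ℕ) : MeasurableSet (strip j) := measurableSet_Icc.prod .univ

lemma strip_eq (j : ℕ) : strip j = Icc ((3 : ℝ) ^ (-(j : ℤ))) (3 * 3 ^ (-(j : ℤ))) ×ˢ univ := by
  rw [strip, sub_eq_add_neg, zpow_add₀ three_ne_zero, zpow_one]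

lemma aedisjoint_strip {a b : ℕ} (hab : a ≠ b) : AEDisjoint volume (strip a) (strip b) := by
  wlog h : a < b generalizing a b
  · exact (this hab.symm (lt_of_le_of_ne (not_lt.mp h) hab.symm)).symm
  have hsub : strip a ∩ strip b ⊆ {(3 : ℝ) ^ (-(a : ℤ))} ×ˢ univ := by
    rintro ⟨x, y⟩ ⟨⟨⟨hax, _⟩, _⟩, ⟨⟨_, hxb⟩, _⟩⟩
    have : (3 : ℝ) ^ (1 - (b : ℤ)) ≤ 3 ^ (-(a : ℤ)) :=
      zpow_le_zpow_right₀ (by norm_num) (by omega)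
    exact ⟨le_antisymm (hxb.trans this) hax, mem_univ y⟩
  refine measure_mono_null hsub ?_
  rw [Measure.volume_eq_prod, Measure.prod_prod, Real.volume_singleton, zero_mul]

lemma sum_volume_inter_strip_le {K : Set (ℝ × ℝ)} (hK : MeasurableSet K) (s : Finset ℕ) :
    ∑ j ∈ s, volume (K ∩ strip j) ≤ volume K := by
  rw [← measure_biUnion_finset₀ (fun a _ b _ hab => (aedisjoint_strip hab).mono
    inter_subset_right inter_subset_right)
    fun j _ => (hK.inter (measurableSet_strip j)).nullMeasurableSet]
  exact measure_mono (iUnion₂_subset fun _ _ => inter_subset_left)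

lemma le_volume_Kset_inter_strip {n : ℕ} {σ : (Fin n → Fin 3) → (Fin n → Fin 3)}
    (hσ : Sticky σ) {j : ℕ} (hj : 1 ≤ j) (hjn : 3 ^ j ≤ 3 * n) :
    ENNReal.ofReal (1 / (3200 * n)) ≤ volume (Kset σ ∩ strip j) := by
  have h3j : (3 : ℝ) ≤ 3 ^ j := by exact_mod_cast Nat.le_self_pow (by omega) 3
  have h3jn : (3 : ℝ) ^ j ≤ 3 * n := by exact_mod_cast hjn
  rw [strip_eq, zpow_neg, zpow_natCast]
  refine le_volume_Kset_inter hσ ?_ ?_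
  · rw [← div_eq_mul_inv, div_le_one (by positivity)]; exact h3j
  · rw [← div_eq_mul_inv, le_div_iff₀ (by positivity), one_mul]; exact h3jn

end Strips

end StickyKakeya

/-- Lemma 1.1: for every sticky map `σ : T_n → C_n` (with `n ≥ 2`),
`|K_σ| ≥ c * log n / n` for an absolute constant `c > 0`. -/
theorem Kset_measure_lower_bound :
    ∃ c : ℝ, 0 < c ∧ ∀ (n : ℕ), 2 ≤ n →
      ∀ σ : (Fin n → Fin 3) → (Fin n → Fin 3), Sticky σ →
      ENNReal.ofReal (c * Real.log n / n) ≤ volume (Kset σ) := by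
  refine ⟨1 / (3200 * Real.log 3), by positivity, fun n hn σ hσ => ?_⟩
  set J := Nat.log 3 n + 1
  have hlog : Real.log n < J * Real.log 3 := by
    rw [← Real.log_pow]
    exact Real.log_lt_log (by positivity)
      (by exact_mod_cast Nat.lt_pow_succ_log_self (by norm_num) n)
  have h3J : 3 ^ J ≤ 3 * n := by
    rw [pow_succ, mul_comm]; exact Nat.mul_le_mul_left 3 (Nat.pow_log_le_self 3 (by omega))
  calc ENNReal.ofReal (1 / (3200 * Real.log 3) * Real.log n / n)
      ≤ ∑ _j ∈ Finset.Icc 1 J, ENNReal.ofReal (1 / (3200 * n)) := by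
        rw [Finset.sum_const, Nat.card_Icc, add_tsub_cancel_right, nsmul_eq_mul,
          ← ENNReal.ofReal_natCast, ← ENNReal.ofReal_mul (by positivity)]
        refine ENNReal.ofReal_le_ofReal ?_
        have h3 : 0 < Real.log 3 := Real.log_pos (by norm_num)
        rw [div_le_iff₀ (by positivity)]
        field_simp
        linarith
    _ ≤ ∑ j ∈ Finset.Icc 1 J, volume (Kset σ ∩ strip j) := Finset.sum_le_sum fun j hj =>
        StickyKakeya.le_volume_Kset_inter_strip hσ (Finset.mem_Icc.mp hj).1
          ((Nat.pow_le_pow_right (by norm_num) (Finset.mem_Icc.mp hj).2).trans h3J)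
    _ ≤ volume (Kset σ) :=
        StickyKakeya.sum_volume_inter_strip_le (StickyKakeya.measurableSet_Kset σ) _
end

section
/- Let $\sigma_n$ be a uniformly random sticky map $T_n \to C_n$ (generated by i.i.d. fair $\{0,2\}$-valued edge labels $r_{t,a}$ on the ternary tree, with the $j$-th digit of $\sigma_n(s)$ equal to $r_{\pi^{j-1}(s), \pi_j(s)}$). Fix $t \in (1/3, 1)$ and $y \in \mathbb{R}$. Then the probability $P_n(t,y)$ that $(t,y) \in K_{\sigma_n}$ is at most the survival probability of Bernoulli$(1/2)$ bond percolation on the tree $T^*_{n,t,y}$ (the subtree of vertices $s$ with $c_{t,y}(s)$ finite), i.e., the probability that after independently deleting each edge with probability $1/2$, a path remains from the root to depth $n$. -/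
open scoped ENNReal Classical

open MeasureTheory
open scoped ENNReal

/-- The real number `.a₁a₂…a_k = ∑ a_j / 3^j` associated to a ternary string
given as a list of digits. -/
noncomputable def val3 : List (Fin 3) → ℝ
  | [] => 0
  | a :: l => ((a : ℝ) + val3 l) / 3


/-- The i.i.d. fair edge labels `r` on the ternary tree determine a (uniformly
random) sticky map: the `j`-th digit of `σ s` is `2` or `0` according to the
label of the edge from `π^(j-1) s` to `π^j s`. -/
def sigmaOf (n : ℕ) (r : TernaryEdges n → Bool) :
    (Fin n → Fin 3) → (Fin n → Fin 3) := fun s j =>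
  if r ⟨j, fun i => s (Fin.castLE j.isLt i)⟩ then 2 else 0

/-- `P_n(t, y)`: the probability, over a uniformly random sticky map
`σ = sigmaOf n r`, that `(t, y) ∈ K_σ`. -/
noncomputable def Pn (n : ℕ) (t y : ℝ) : ℝ :=
  (Nat.card {r : TernaryEdges n → Bool // (t, y) ∈ Kset (sigmaOf n r)} : ℝ) /
    (Nat.card (TernaryEdges n → Bool) : ℝ)

/-- The tree `T^*_{n,t,y}`: the set of ternary strings `s` of length `≤ n`
admitting some `c ∈ C_k` (`k` the length of `s`) with `y ∈ I_{s,c,t}`,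
i.e. `c_{t,y}(s)` is finite. -/
def inTree (n : ℕ) (t y : ℝ) (l : List (Fin 3)) : Prop :=
  l.length ≤ n ∧ ∃ c : List (Fin 3), c.length = l.length ∧
    (∀ d ∈ c, d ≠ 1) ∧
    val3 l / 3 + t * val3 c ≤ y ∧
    y ≤ val3 l / 3 + (1 + 3 * t) / 3 ^ (l.length + 1) + t * val3 c

/-!
The random labels `r` are coupled with a percolation configuration by declaring an edge
retained exactly when its label is the one prescribed by `c_{t,y}` at its lower endpoint.
This coupling is a bijection of configurations. If `(t, y)` lies in the tube `P_{σ,s}`, then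
`c_{t,y}` along the path to `s` is the sequence of prefixes of `σ(s)` (the intervals
`I_{s,c,t}` are nested, and for `t > 1/3` disjoint in `c`), so every edge on that path is
retained.
-/

lemma val3_nonneg (l : List (Fin 3)) : 0 ≤ val3 l := by
  induction l with
  | nil => simp [val3]
  | cons a l ih => simp only [val3]; positivity

lemma val3_le_one_sub (l : List (Fin 3)) : val3 l ≤ 1 - 1 / 3 ^ l.length := by
  induction l with
  | nil => simp [val3]
  | cons a l ih =>
    have ha : (a : ℝ) ≤ 2 := by fin_cases a <;> norm_num
    simp only [val3, List.length_cons, pow_succ]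
    have h3 : (0 : ℝ) < 3 ^ l.length := by positivity
    rw [div_le_iff₀ (by norm_num)]
    field_simp at ih ⊢
    nlinarith

lemma val3_append (l m : List (Fin 3)) :
    val3 (l ++ m) = val3 l + val3 m / 3 ^ l.length := by
  induction l with
  | nil => simp [val3]
  | cons a l ih =>
    simp only [List.cons_append, val3, ih, List.length_cons, pow_succ]
    field_simp
    ring

lemma val3_ofFn {n : ℕ} (f : Fin n → Fin 3) : val3 (List.ofFn f) = valF f := by
  induction n with
  | zero => simp [valF, val3]
  | succ m ih =>
    rw [List.ofFn_succ, val3, ih, valF, valF, Fin.sum_univ_succ, add_div, Finset.sum_div]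
    simp only [Fin.val_zero, Fin.val_succ, pow_succ, div_div]
    ring

lemma two_div_pow_le_abs_val3_sub (c₁ c₂ : List (Fin 3)) (hlen : c₁.length = c₂.length)
    (h₁ : ∀ d ∈ c₁, d ≠ 1) (h₂ : ∀ d ∈ c₂, d ≠ 1) (hne : c₁ ≠ c₂) :
    2 / 3 ^ c₁.length ≤ |val3 c₁ - val3 c₂| := by
  induction c₁ generalizing c₂ with
  | nil => cases c₂ <;> simp_all
  | cons a l₁ ih =>
    cases c₂ with
    | nil => simp at hlen
    | cons b l₂ =>
      simp only [List.length_cons, Nat.add_right_cancel_iff] at hlen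
      simp only [List.mem_cons, forall_eq_or_imp] at h₁ h₂
      have hval : val3 (a :: l₁) - val3 (b :: l₂) =
          ((a - b : ℝ) + (val3 l₁ - val3 l₂)) / 3 := by
        simp only [val3]; ring
      have h3 : (0 : ℝ) < 3 ^ l₁.length := by positivity
      rw [hval, abs_div, abs_of_pos (by norm_num : (0 : ℝ) < 3), List.length_cons, pow_succ,
        div_le_div_iff₀ (by positivity) (by norm_num)]
      by_cases hab : a = b
      · subst hab
        have := ih l₂ hlen h₁.2 h₂.2 (by simpa using hne)
        rw [div_le_iff₀ h3] at this
        simp only [sub_self, zero_add]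
        nlinarith
      · have hab2 : |(a - b : ℝ)| = 2 := by
          have := h₁.1; have := h₂.1
          fin_cases a <;> fin_cases b <;> simp_all
        have hd : |val3 l₁ - val3 l₂| ≤ 1 - 1 / 3 ^ l₁.length := by
          have := val3_le_one_sub l₁; have := val3_le_one_sub l₂
          have := val3_nonneg l₁; have := val3_nonneg l₂
          rw [← hlen] at *
          rw [abs_sub_le_iff]
          constructor <;> linarith
        have hlow : 1 + 1 / 3 ^ l₁.length ≤ |(a - b : ℝ) + (val3 l₁ - val3 l₂)| := by
          linarith [abs_sub_abs_le_abs_add (a - b : ℝ) (val3 l₁ - val3 l₂)]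
        have hexp : (1 + 1 / 3 ^ l₁.length) * (3 ^ l₁.length * 3) =
            3 * 3 ^ l₁.length + (3 : ℝ) := by
          field_simp
        have h3' : 0 ≤ (3 : ℝ) ^ l₁.length * 3 := by positivity
        nlinarith [mul_le_mul_of_nonneg_right hlow h3',
          one_le_pow₀ (by norm_num : (1 : ℝ) ≤ 3) (n := l₁.length)]

/-- `IsCode t y l c` says `c = c_{t,y}(l)`, i.e. `c ∈ C_k` and `y ∈ I_{l,c,t}` (`k = l.length`). -/
def IsCode (t y : ℝ) (l c : List (Fin 3)) : Prop :=
  c.length = l.length ∧ (∀ d ∈ c, d ≠ 1) ∧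
    val3 l / 3 + t * val3 c ≤ y ∧
    y ≤ val3 l / 3 + (1 + 3 * t) / 3 ^ (l.length + 1) + t * val3 c

section IsCode

variable {t y : ℝ}

/-- The intervals `I_{l,c,t}` have length `(1 + 3t) / 3^(k+1)`, less than the gap
`2t / 3^k` between their left endpoints. -/
lemma IsCode.unique (ht : 1 / 3 < t) {l c₁ c₂ : List (Fin 3)}
    (h₁ : IsCode t y l c₁) (h₂ : IsCode t y l c₂) : c₁ = c₂ := by
  by_contra hne
  obtain ⟨hl₁, hd₁, hlo₁, hhi₁⟩ := h₁
  obtain ⟨hl₂, hd₂, hlo₂, hhi₂⟩ := h₂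
  have hgap := two_div_pow_le_abs_val3_sub c₁ c₂ (hl₁.trans hl₂.symm) hd₁ hd₂ hne
  rw [hl₁] at hgap
  set q : ℝ := 1 / 3 ^ (l.length + 1)
  have hq : 0 < q := by positivity
  have h2q : 2 / 3 ^ l.length = 6 * q := by
    simp only [q, pow_succ]; field_simp; norm_num
  have hwidth : (1 + 3 * t) / 3 ^ (l.length + 1) = (1 + 3 * t) * q := by ring
  rw [h2q] at hgap
  rw [hwidth] at hhi₁ hhi₂
  have hclose : t * |val3 c₁ - val3 c₂| ≤ (1 + 3 * t) * q := by
    rw [← abs_of_pos (by linarith : 0 < t), ← abs_mul, abs_of_pos (by linarith : 0 < t),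
      abs_le]
    constructor <;> linarith
  nlinarith [mul_le_mul_of_nonneg_left hgap (by linarith : 0 ≤ t)]

/-- The intervals `I_{l,c,t}` are nested along the tree. -/
lemma IsCode.of_append (ht : 0 ≤ t) {l₁ l₂ c₁ c₂ : List (Fin 3)}
    (hlen : c₁.length = l₁.length) (h : IsCode t y (l₁ ++ l₂) (c₁ ++ c₂)) :
    IsCode t y l₁ c₁ := by
  obtain ⟨hl, hd, hlo, hhi⟩ := h
  simp only [List.length_append, hlen, Nat.add_left_cancel_iff] at hl
  simp only [val3_append, hlen, List.length_append] at hlo hhi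
  refine ⟨hlen, fun d hd' => hd d (List.mem_append_left _ hd'), ?_, ?_⟩
  · have := val3_nonneg l₂; have := val3_nonneg c₂
    have : 0 ≤ t * (val3 c₂ / 3 ^ l₁.length) := by positivity
    have : 0 ≤ val3 l₂ / 3 ^ l₁.length := by positivity
    linarith
  · have hc₂ := val3_le_one_sub c₂
    rw [hl] at hc₂
    set w : ℝ := 1 / 3 ^ l₂.length
    set q : ℝ := 1 / 3 ^ (l₁.length + 1)
    have hq : 0 ≤ q := by positivity
    have hl₂ : val3 l₂ ≤ 1 - w := val3_le_one_sub l₂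
    have key : val3 l₂ + 3 * t * val3 c₂ + (1 + 3 * t) * w ≤ 1 + 3 * t := by nlinarith
    have e₁ : val3 l₂ / 3 ^ l₁.length = 3 * q * val3 l₂ := by
      simp only [q, pow_succ]; field_simp
    have e₂ : val3 c₂ / 3 ^ l₁.length = 3 * q * val3 c₂ := by
      simp only [q, pow_succ]; field_simp
    have e₃ : (1 + 3 * t) / 3 ^ (l₁.length + l₂.length + 1) = (1 + 3 * t) * q * w := by
      simp only [q, w, pow_succ, pow_add]; field_simp
    have e₄ : (1 + 3 * t) / 3 ^ (l₁.length + 1) = (1 + 3 * t) * q := by ring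
    rw [e₁, e₂, e₃] at hhi
    rw [e₄]
    nlinarith [mul_le_mul_of_nonneg_left key hq]

lemma IsCode.take (ht : 0 ≤ t) {l c : List (Fin 3)} (h : IsCode t y l c) (k : ℕ) :
    IsCode t y (l.take k) (c.take k) := by
  have hlen : c.length = l.length := h.1
  rw [← List.take_append_drop k l, ← List.take_append_drop k c] at h
  exact h.of_append ht (by simp [hlen])

end IsCode

lemma isCode_ofFn_of_mem_Ptube {n : ℕ} {t y : ℝ} {σ : (Fin n → Fin 3) → (Fin n → Fin 3)}
    {s : Fin n → Fin 3} (hσ : ∀ j, σ s j ≠ 1) (h : (t, y) ∈ Ptube σ s) :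
    IsCode t y (List.ofFn s) (List.ofFn (σ s)) := by
  obtain ⟨ht, -, hlo, hhi⟩ := h
  unfold IsCode
  simp only [val3_ofFn, List.length_ofFn]
  refine ⟨trivial, by simpa [List.mem_ofFn] using hσ, by linarith, ?_⟩
  have : 1 / 3 ^ (n + 1) ≤ (1 + 3 * t) / (3 : ℝ) ^ (n + 1) := by gcongr; linarith
  linarith

lemma sigmaOf_ne_one {n : ℕ} (r : TernaryEdges n → Bool) (s : Fin n → Fin 3) (j : Fin n) :
    sigmaOf n r s j ≠ 1 := by
  unfold sigmaOf; split <;> decide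

instance (n : ℕ) : Finite (TernaryEdges n) := by
  unfold TernaryEdges; infer_instance

/-- The label an edge must carry to lie on a path to a point of `K_σ` over `(t, y)`: the last
digit of `c_{t,y}` at its lower endpoint, `2 ↦ true` and `0 ↦ false` as in `sigmaOf`. -/
noncomputable def prescribedLabel {n : ℕ} (t y : ℝ) (e : TernaryEdges n) : Bool :=
  decide (∃ c, IsCode t y (List.ofFn e.2) c ∧ c.getD e.1 0 = 2)

lemma prescribedLabel_eq {n : ℕ} {t y : ℝ} (ht : 1 / 3 < t) {r : TernaryEdges n → Bool}
    {s : Fin n → Fin 3} (h : IsCode t y (List.ofFn s) (List.ofFn (sigmaOf n r s))) (k : Fin n) :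
    prescribedLabel t y ⟨k, fun i => s (Fin.castLE k.isLt i)⟩ =
      r ⟨k, fun i => s (Fin.castLE k.isLt i)⟩ := by
  set e : TernaryEdges n := ⟨k, fun i => s (Fin.castLE k.isLt i)⟩
  set C := (List.ofFn (sigmaOf n r s)).take (k + 1)
  have hC : IsCode t y (List.ofFn e.2) C :=
    Fin.ofFn_take_eq_take_ofFn k.isLt s ▸ h.take (by linarith) (k + 1)
  have hdigit : C.getD k 0 = if r e then 2 else 0 := by
    simp [C, e, sigmaOf]
  have hiff : (∃ c, IsCode t y (List.ofFn e.2) c ∧ c.getD e.1 0 = 2) ↔ C.getD k 0 = 2 :=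
    ⟨fun ⟨c, hc, hd⟩ => hc.unique ht hC ▸ hd, fun hd => ⟨C, hC, hd⟩⟩
  rw [prescribedLabel, hiff, hdigit]
  cases r e <;> simp

def agreeWith {α : Type*} (m r : α → Bool) : α → Bool :=
  fun a => r a == m a

lemma agreeWith_involutive {α : Type*} (m : α → Bool) : Function.Involutive (agreeWith m) := by
  intro r
  funext a
  simp only [agreeWith]
  cases r a <;> cases m a <;> rfl

lemma survives_agreeWith_prescribedLabel {n : ℕ} {t y : ℝ} (ht : 1 / 3 < t)
    {r : TernaryEdges n → Bool} (hr : (t, y) ∈ Kset (sigmaOf n r)) :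
    Survives n (inTree n t y) (agreeWith (prescribedLabel t y) r) := by
  obtain ⟨s, hs⟩ := Set.mem_iUnion.1 hr
  have hcode := isCode_ofFn_of_mem_Ptube (sigmaOf_ne_one r s) hs
  refine ⟨s, ⟨(List.length_ofFn).le, _, hcode⟩, fun k => ?_⟩
  simp [agreeWith, prescribedLabel_eq ht hcode k]

lemma card_div_card_le_of_injective {α : Type*} [Finite α] {p q : α → Prop} {f : α → α}
    (hf : f.Injective) (hpq : ∀ a, p a → q (f a)) :
    (Nat.card {a // p a} : ℝ) / Nat.card α ≤ Nat.card {a // q a} / Nat.card α := by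
  gcongr
  exact Nat.card_le_card_of_injective (Subtype.map f hpq) (Subtype.map_injective hpq hf)

theorem Pn_le_survivalProb_general (n : ℕ) (t y : ℝ) (ht : 1 / 3 < t) :
    Pn n t y ≤ survivalProb n (inTree n t y) :=
  card_div_card_le_of_injective (agreeWith_involutive _).injective
    fun _ => survives_agreeWith_prescribedLabel ht

/-- Lemma 1.3: for `1/3 < t < 1`, the probability that `(t, y)` lies in the
random Kakeya set `K_{σ_n}` is at most the survival probability of
Bernoulli(1/2) bond percolation on the tree `T^*_{n,t,y}`. -/
theorem Pn_le_survivalProb (n : ℕ) (t y : ℝ) (ht : 1 / 3 < t) (ht1 : t < 1) :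
    Pn n t y ≤ survivalProb n (inTree n t y) :=
  Pn_le_survivalProb_general n t y ht
end

section
/- With $\sigma_n$ a uniformly random sticky map and $t \in (1/3, 1)$, $y \in \mathbb{R}$: the probability $P_n(t,y)$ that $(t,y) \in K_{\sigma_n}$ satisfies $P_n(t,y) \le C/n$ for an absolute constant $C$. -/
open scoped ENNReal Classical

open MeasureTheory
open scoped ENNReal

/-!
Zooming into the first ternary digit shows that `1 - Pn` obeys the recursion of the extinction
probability of Bernoulli(1/2) percolation on the tree `T^*_{n,t,y}`; since `t > 1/3`, at most one
slope digit is possible at each vertex. Lyons' argument, run as an induction on the depth, bounds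
`Pn` by `2C / (1 + C)`, where `C` is the effective conductance of this tree when an edge at depth
`k + 1` has resistance `2 ^ k`. Short-circuiting each level (Nash-Williams, via Milne's
inequality) gives `1 / C ≥ ∑ₖ 2 ^ k / N_{k+1}`, `N_j` the number of vertices at depth `j`. For
fixed slope digits these vertices are `3 ^ (-j)`-separated points of an interval of length
`< 4 · 3 ^ (-j)`, so `N_j ≤ 4 · 2 ^ j`, whence `1 / C ≥ n / 8` and `Pn ≤ 16 / n`.
-/

open scoped NNReal

namespace ENNReal

lemma inv_add_le_sq_mul_inv_add_sq_mul_inv {x y l m : ℝ≥0∞} (hlm : l + m = 1) :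
    (x + y)⁻¹ ≤ l ^ 2 * x⁻¹ + m ^ 2 * y⁻¹ := by
  rcases eq_or_ne x ⊤ with rfl | hx
  · simp
  rcases eq_or_ne y ⊤ with rfl | hy
  · simp
  rcases eq_or_ne l 0 with rfl | hl
  · simp_all
  rcases eq_or_ne m 0 with rfl | hm
  · simp_all
  rcases eq_or_ne x 0 with rfl | hx0
  · simp [hl]
  rcases eq_or_ne y 0 with rfl | hy0
  · simp [hm]
  have hl1 : l ≠ ⊤ := ne_top_of_le_ne_top one_ne_top (hlm ▸ le_self_add)
  have hm1 : m ≠ ⊤ := ne_top_of_le_ne_top one_ne_top (hlm ▸ le_add_self)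
  lift x to ℝ≥0 using hx
  lift y to ℝ≥0 using hy
  lift l to ℝ≥0 using hl1
  lift m to ℝ≥0 using hm1
  have hxy : x + y ≠ 0 := by simp_all
  simp only [ne_eq, coe_eq_zero] at hx0 hy0
  rw [← coe_add, ← coe_inv hxy, ← coe_inv hx0, ← coe_inv hy0, ← coe_pow, ← coe_pow, ← coe_mul,
    ← coe_mul, ← coe_add, coe_le_coe, ← NNReal.coe_le_coe]
  have hlm' : (l : ℝ) + m = 1 := by exact_mod_cast hlm
  have hx' : (0 : ℝ) < x := by positivity
  have hy' : (0 : ℝ) < y := by positivity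
  push_cast
  rw [← sub_nonneg]
  have key : (l : ℝ) ^ 2 * (x : ℝ)⁻¹ + m ^ 2 * (y : ℝ)⁻¹ - ((x : ℝ) + y)⁻¹ =
      (l * y - m * x) ^ 2 / (x * y * (x + y)) := by
    field_simp
    linear_combination (x * y * (l + m + 1) : ℝ) * hlm'
  rw [key]
  positivity

/-- Milne's inequality: short-circuiting the midpoints of the parallel branches `x i + y i` can
only lower the resistance. -/
lemma inv_sum_inv_add_inv_sum_inv_le {ι : Type*} (s : Finset ι) (x y : ι → ℝ≥0∞) :
    (∑ i ∈ s, (x i)⁻¹)⁻¹ + (∑ i ∈ s, (y i)⁻¹)⁻¹ ≤ (∑ i ∈ s, (x i + y i)⁻¹)⁻¹ := by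
  set X := ∑ i ∈ s, (x i)⁻¹
  set Y := ∑ i ∈ s, (y i)⁻¹
  set c := X⁻¹ + Y⁻¹
  rcases eq_or_ne c ⊤ with hc | hc
  · -- one of the two circuits has a short-circuited branch, hence so does their sum
    have : ∀ i ∈ s, (x i + y i)⁻¹ = 0 := by
      rcases add_eq_top.mp hc with h | h <;> intro i hi <;>
        simp_all [X, Y, Finset.sum_eq_zero_iff]
    simp [Finset.sum_eq_zero this]
  rcases eq_or_ne c 0 with hc0 | hc0
  · simp [hc0]
  have hX : X⁻¹ ≠ ⊤ := fun h => hc (by simp [c, h])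
  have hY : Y⁻¹ ≠ ⊤ := fun h => hc (by simp [c, h])
  -- the optimal weights `X⁻¹ / c` and `Y⁻¹ / c` in the Cauchy–Schwarz inequality
  have hweights : X⁻¹ / c + Y⁻¹ / c = 1 := by
    rw [ENNReal.div_add_div_same, ENNReal.div_self hc0 hc]
  have hsq : ∀ Z : ℝ≥0∞, Z⁻¹ ≠ ⊤ → (Z⁻¹ / c) ^ 2 * Z = Z⁻¹ * c⁻¹ ^ 2 := by
    intro Z hZ
    rcases eq_or_ne Z ⊤ with rfl | hZt
    · simp
    rw [div_eq_mul_inv, show (Z⁻¹ * c⁻¹) ^ 2 * Z = Z⁻¹ * c⁻¹ ^ 2 * (Z⁻¹ * Z) by ring,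
      ENNReal.inv_mul_cancel (inv_ne_top.mp hZ) hZt, mul_one]
  calc c = (c⁻¹)⁻¹ := (inv_inv c).symm
    _ ≤ _ := by
      refine ENNReal.inv_le_inv.mpr ?_
      calc ∑ i ∈ s, (x i + y i)⁻¹
          ≤ ∑ i ∈ s, ((X⁻¹ / c) ^ 2 * (x i)⁻¹ + (Y⁻¹ / c) ^ 2 * (y i)⁻¹) :=
            Finset.sum_le_sum fun i _ => inv_add_le_sq_mul_inv_add_sq_mul_inv hweights
        _ = (X⁻¹ / c) ^ 2 * X + (Y⁻¹ / c) ^ 2 * Y := by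
            rw [Finset.sum_add_distrib, Finset.mul_sum, Finset.mul_sum]
        _ = c⁻¹ := by
            rw [hsq X hX, hsq Y hY, ← add_mul, sq, ← mul_assoc, ENNReal.mul_inv_cancel hc0 hc,
              one_mul]

lemma sum_inv_sum_inv_le_inv_sum_inv_sum {ι κ : Type*} (s : Finset ι) (K : Finset κ)
    (x : κ → ι → ℝ≥0∞) :
    ∑ k ∈ K, (∑ i ∈ s, (x k i)⁻¹)⁻¹ ≤ (∑ i ∈ s, (∑ k ∈ K, x k i)⁻¹)⁻¹ := by
  classical
  induction K using Finset.induction_on with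
  | empty => simp
  | insert k K hk ih =>
    simp only [Finset.sum_insert hk]
    exact (add_le_add le_rfl ih).trans (inv_sum_inv_add_inv_sum_inv_le s (x k) _)

lemma inv_sum_inv_div {ι : Type*} (s : Finset ι) (x : ι → ℝ≥0∞) {c : ℝ≥0∞} (hc0 : c ≠ 0)
    (hc : c ≠ ⊤) : (∑ i ∈ s, (c / x i)⁻¹)⁻¹ = c / ∑ i ∈ s, x i := by
  simp only [ENNReal.inv_div (Or.inr hc) (Or.inr hc0)]
  simp only [div_eq_mul_inv, ← Finset.sum_mul]
  rw [ENNReal.mul_inv (Or.inr (inv_ne_top.mpr hc0)) (Or.inr (by simpa using hc)), inv_inv,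
    mul_comm]

lemma one_sub_toReal_inv_one_add_le {C : ℝ≥0∞} (hC : C ≠ ⊤) :
    1 - ((1 + C)⁻¹).toReal ≤ C.toReal := by
  have hc := ENNReal.toReal_nonneg (a := C)
  rw [ENNReal.toReal_inv, ENNReal.toReal_add ENNReal.one_ne_top hC, ENNReal.toReal_one]
  field_simp
  nlinarith

end ENNReal

namespace StickyKakeya

noncomputable def unifProb {α : Type*} (p : α → Prop) : ℝ := Nat.card {x // p x} / Nat.card α

lemma unifProb_le_one {α : Type*} [Finite α] (p : α → Prop) : unifProb p ≤ 1 :=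
  div_le_one_of_le₀ (by exact_mod_cast Finite.card_subtype_le p) (Nat.cast_nonneg _)

lemma unifProb_not {α : Type*} [Finite α] [Nonempty α] (p : α → Prop) :
    unifProb (fun x => ¬ p x) = 1 - unifProb p := by
  have := Fintype.ofFinite α
  have hα : (0 : ℝ) < Nat.card α := by exact_mod_cast Nat.card_pos
  rw [unifProb, unifProb, eq_sub_iff_add_eq, ← add_div, div_eq_one_iff_eq hα.ne']
  simp only [Nat.card_eq_fintype_card]
  rw [Fintype.card_subtype_compl]
  exact_mod_cast Nat.sub_add_cancel (Fintype.card_subtype_le p)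

lemma unifProb_congr {α β : Type*} {p : α → Prop} {q : β → Prop} (e : α ≃ β)
    (h : ∀ x, p x ↔ q (e x)) : unifProb p = unifProb q := by
  rw [unifProb, unifProb, Nat.card_congr e, Nat.card_congr (e.subtypeEquiv h)]

lemma unifProb_pi {ι : Type*} [Fintype ι] {β : ι → Type*} (p : ∀ i, β i → Prop) :
    unifProb (fun g : ∀ i, β i => ∀ i, p i (g i)) = ∏ i, unifProb (p i) := by
  rw [unifProb, Nat.card_congr (Equiv.subtypePiEquivPi (p := p)), Nat.card_pi, Nat.card_pi]
  simp only [Nat.cast_prod, Finset.prod_div_distrib, unifProb]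

lemma unifProb_bool_prod {β : Type*} [Finite β] (p : Bool → β → Prop) :
    unifProb (fun x : Bool × β => p x.1 x.2) = (unifProb (p true) + unifProb (p false)) / 2 := by
  simp only [unifProb, Nat.card_congr (Equiv.subtypeProdEquivSigmaSubtype p), Nat.card_sigma,
    Nat.card_prod, Fintype.sum_bool, Nat.card_eq_fintype_card (α := Bool), Fintype.card_bool]
  push_cast
  ring

lemma card_le_of_separated {α : Type*} (f : α → ℝ) {x δ : ℝ} {m : ℕ} (hδ : 0 < δ)
    (hf : ∀ a, f a ∈ Set.Ico x (x + m * δ)) (hsep : ∀ a b, a ≠ b → δ ≤ |f a - f b|) :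
    Nat.card α ≤ m := by
  have h0 : ∀ a, 0 ≤ ⌊(f a - x) / δ⌋ := fun a =>
    Int.floor_nonneg.mpr (div_nonneg (by linarith [(hf a).1]) hδ.le)
  have hcell : ∀ a, ⌊(f a - x) / δ⌋.toNat < m := fun a => by
    have : (f a - x) / δ < m := by rw [div_lt_iff₀ hδ]; linarith [(hf a).2]
    have := Int.floor_lt.mpr this
    have := h0 a
    omega
  refine (Nat.card_le_card_of_injective (fun a => (⟨_, hcell a⟩ : Fin m)) fun a b hab => ?_).trans
    (Nat.card_eq_fintype_card.trans (Fintype.card_fin m)).le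
  by_contra hne
  have hfloor : ⌊(f a - x) / δ⌋ = ⌊(f b - x) / δ⌋ := by
    have : ⌊(f a - x) / δ⌋.toNat = ⌊(f b - x) / δ⌋.toNat := congrArg Fin.val hab
    have := h0 a
    have := h0 b
    omega
  have := Int.abs_sub_lt_one_of_floor_eq_floor hfloor
  rw [← sub_div, sub_sub_sub_cancel_right, abs_div, abs_of_pos hδ, div_lt_one hδ] at this
  linarith [hsep a b hne]

noncomputable def cayley (u : ℝ) : ℝ := (1 - u) / (1 + u)

lemma cayley_nonneg {u : ℝ} (h0 : 0 ≤ u) (h1 : u ≤ 1) : 0 ≤ cayley u :=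
  div_nonneg (by linarith) (by linarith)

lemma cayley_add_le_mul {x y : ℝ} (hx : 0 ≤ x) (hy : 0 ≤ y) :
    cayley (x + y) ≤ cayley x * cayley y := by
  rw [cayley, cayley, cayley, div_mul_div_comm, div_le_div_iff₀ (by linarith) (by positivity)]
  nlinarith [mul_nonneg (mul_nonneg hx hy) (add_nonneg hx hy)]

lemma cayley_sum_le_prod {ι : Type*} (s : Finset ι) {u : ι → ℝ} (h0 : ∀ i ∈ s, 0 ≤ u i)
    (h1 : ∀ i ∈ s, u i ≤ 1) : cayley (∑ i ∈ s, u i) ≤ ∏ i ∈ s, cayley (u i) := by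
  classical
  induction s using Finset.induction_on with
  | empty => simp [cayley]
  | insert i s hi ih =>
    rw [Finset.sum_insert hi, Finset.prod_insert hi]
    have hs := fun j hj => h0 j (Finset.mem_insert_of_mem hj)
    calc cayley (u i + ∑ j ∈ s, u j) ≤ cayley (u i) * cayley (∑ j ∈ s, u j) :=
          cayley_add_le_mul (h0 i (Finset.mem_insert_self i s)) (Finset.sum_nonneg hs)
      _ ≤ cayley (u i) * ∏ j ∈ s, cayley (u j) :=
          mul_le_mul_of_nonneg_left (ih hs fun j hj => h1 j (Finset.mem_insert_of_mem hj))
            (cayley_nonneg (h0 i (Finset.mem_insert_self i s)) (h1 i (Finset.mem_insert_self i s)))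

lemma valF_cons {j : ℕ} (a : Fin 3) (s : Fin j → Fin 3) :
    valF (Fin.cons a s : Fin (j + 1) → Fin 3) = a / 3 + valF s / 3 := by
  simp only [valF, Fin.sum_univ_succ, Fin.cons_zero, Fin.cons_succ, Fin.val_zero, Fin.val_succ,
    Finset.sum_div, pow_succ]
  norm_num [div_div, mul_comm]

lemma valF_nonneg {j : ℕ} (s : Fin j → Fin 3) : 0 ≤ valF s :=
  Finset.sum_nonneg fun _ _ => by positivity

lemma fin3_le_two (a : Fin 3) : (a : ℝ) ≤ 2 := by
  exact_mod_cast Nat.le_of_lt_succ a.isLt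

lemma valF_le {j : ℕ} (s : Fin j → Fin 3) : valF s ≤ 1 - (1 / 3 : ℝ) ^ j := by
  induction j with
  | zero => simp [valF]
  | succ j ih =>
    rw [← Fin.cons_self_tail s, valF_cons, pow_succ]
    linarith [fin3_le_two (s 0), ih (Fin.tail s)]

lemma pow_le_abs_valF_sub {j : ℕ} {s s' : Fin j → Fin 3} (h : s ≠ s') :
    (1 / 3 : ℝ) ^ j ≤ |valF s - valF s'| := by
  induction j with
  | zero => exact absurd (Subsingleton.elim s s') h
  | succ j ih =>
    rw [← Fin.cons_self_tail s, ← Fin.cons_self_tail s', valF_cons, valF_cons, pow_succ]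
    by_cases h0 : s 0 = s' 0
    · have htail : Fin.tail s ≠ Fin.tail s' := fun ht =>
        h (by rw [← Fin.cons_self_tail s, ← Fin.cons_self_tail s', h0, ht])
      have := ih htail
      rw [h0, show ∀ a b c : ℝ, a / 3 + b / 3 - (a / 3 + c / 3) = (b - c) / 3 by intros; ring,
        abs_div, abs_of_pos (three_pos : (0 : ℝ) < 3)]
      linarith
    · -- the first digits differ by at least one, the tails by less than one
      have hdigit : 1 ≤ |(s 0 : ℝ) - s' 0| := by
        have : ((s 0 : ℕ) : ℤ) ≠ (s' 0 : ℕ) := by exact_mod_cast Fin.val_ne_of_ne h0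
        exact_mod_cast Int.one_le_abs (sub_ne_zero.mpr this)
      have htail : |valF (Fin.tail s) - valF (Fin.tail s')| ≤ 1 - (1 / 3) ^ j := by
        rw [abs_sub_le_iff]
        constructor <;> linarith [valF_nonneg (Fin.tail s), valF_nonneg (Fin.tail s'),
          valF_le (Fin.tail s), valF_le (Fin.tail s')]
      have := abs_sub_abs_le_abs_sub ((s 0 - s' 0 : ℝ) / 3)
        (-(valF (Fin.tail s) - valF (Fin.tail s')) / 3)
      rw [abs_div, abs_div, abs_neg, abs_of_pos (three_pos : (0 : ℝ) < 3)] at this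
      rw [show ∀ a b c d : ℝ, a / 3 + c / 3 - (b / 3 + d / 3) = (a - b) / 3 - -(c - d) / 3 by
        intros; ring]
      linarith

instance (n : ℕ) : Fintype (TernaryEdges n) := inferInstanceAs (Fintype (Σ _ : Fin n, _))

def rootEdge {n : ℕ} (a : Fin 3) : TernaryEdges (n + 1) := ⟨0, fun _ => a⟩

def liftEdge {n : ℕ} (a : Fin 3) (e : TernaryEdges n) : TernaryEdges (n + 1) :=
  ⟨e.1.succ, Fin.cons a e.2⟩

def edgeEquiv (n : ℕ) : Fin 3 × Option (TernaryEdges n) ≃ TernaryEdges (n + 1) where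
  toFun
    | (a, none) => rootEdge a
    | (a, some e) => liftEdge a e
  invFun e := Fin.cases (motive := fun k : Fin (n + 1) => (Fin (k + 1) → Fin 3) → _)
    (fun f => (f 0, none)) (fun k f => (f 0, some ⟨k, Fin.tail f⟩)) e.1 e.2
  left_inv
    | (a, none) => rfl
    | (a, some e) => by
      simp only [liftEdge]
      rw [Fin.cases_succ, Fin.tail_cons, Fin.cons_zero]
      rfl
  right_inv := by
    rintro ⟨k, f⟩
    induction k using Fin.cases with
    | zero =>
      dsimp only
      rw [Fin.cases_zero]
      exact Sigma.ext rfl (heq_of_eq (funext fun i => congrArg f (Fin.fin_one_eq_zero i).symm))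
    | succ k =>
      dsimp only
      rw [Fin.cases_succ]
      exact Sigma.ext rfl (heq_of_eq (Fin.cons_self_tail f))

def subtreeConfig {n : ℕ} (r : TernaryEdges (n + 1) → Bool) (a : Fin 3) :
    TernaryEdges n → Bool :=
  fun e => r (liftEdge a e)

def configEquiv (n : ℕ) :
    (TernaryEdges (n + 1) → Bool) ≃ (Fin 3 → Bool × (TernaryEdges n → Bool)) :=
  ((edgeEquiv n).arrowCongr (Equiv.refl Bool)).symm.trans
    ((Equiv.curry _ _ _).trans (Equiv.piCongrRight fun _ => Equiv.piOptionEquivProd))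

lemma configEquiv_apply {n : ℕ} (r : TernaryEdges (n + 1) → Bool) (a : Fin 3) :
    configEquiv n r a = (r (rootEdge a), subtreeConfig r a) := rfl

lemma sigmaOf_cons {n : ℕ} (r : TernaryEdges (n + 1) → Bool) (a : Fin 3) (s : Fin n → Fin 3) :
    sigmaOf (n + 1) r (Fin.cons a s) =
      Fin.cons (if r (rootEdge a) then 2 else 0) (sigmaOf n (subtreeConfig r a) s) := by
  funext j
  induction j using Fin.cases with
  | zero =>
    simp only [sigmaOf, Fin.cons_zero, rootEdge]
    congr 3
    exact Sigma.ext rfl (heq_of_eq (funext fun i => by rw [Fin.fin_one_eq_zero i]; rfl))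
  | succ j =>
    simp only [sigmaOf, Fin.cons_succ, subtreeConfig, liftEdge]
    congr 4
    funext i
    induction i using Fin.cases <;> rfl

/-- Zooming by a factor `3` into the tubes with first digit `a` and first slope digit `2` (if `b`)
or `0`. -/
noncomputable def childY (t y : ℝ) (a : Fin 3) (b : Bool) : ℝ :=
  3 * y - a / 3 - if b then 2 * t else 0

lemma mem_Ptube_cons_iff {n : ℕ} {t y : ℝ} (r : TernaryEdges (n + 1) → Bool) (a : Fin 3)
    (s : Fin n → Fin 3) :
    (t, y) ∈ Ptube (sigmaOf (n + 1) r) (Fin.cons a s) ↔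
      (t, childY t y a (r (rootEdge a))) ∈ Ptube (sigmaOf n (subtreeConfig r a)) s := by
  have hthick : (3 : ℝ) * (1 / 3 ^ (n + 1 + 1)) = 1 / 3 ^ (n + 1) := by
    rw [pow_succ]; field_simp
  simp only [Ptube, tube, Set.mem_ofPred_eq, sigmaOf_cons, valF_cons, childY]
  cases r (rootEdge a) <;> simp only [Bool.false_eq_true, if_true, if_false] <;>
    constructor <;> rintro ⟨h1, h2, h3, h4⟩ <;> refine ⟨h1, h2, ?_, ?_⟩ <;> norm_num at * <;>
    linarith

lemma mem_Kset_succ_iff {n : ℕ} {t y : ℝ} (r : TernaryEdges (n + 1) → Bool) :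
    (t, y) ∈ Kset (sigmaOf (n + 1) r) ↔
      ∃ a, (t, childY t y a (r (rootEdge a))) ∈ Kset (sigmaOf n (subtreeConfig r a)) := by
  simp only [Kset, Set.mem_iUnion, ← mem_Ptube_cons_iff]
  exact ⟨fun ⟨s, hs⟩ => ⟨s 0, Fin.tail s, by rwa [Fin.cons_self_tail]⟩,
    fun ⟨a, s, hs⟩ => ⟨_, hs⟩⟩

/-- Above the vertical line `x = t ≥ 0`, every tube of generation `n` lies inside
`[0, windowTop t n]`. -/
noncomputable def windowTop (t : ℝ) (n : ℕ) : ℝ := 1 / 3 + t - t * (1 / 3) ^ n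

lemma windowTop_succ (t : ℝ) (n : ℕ) :
    windowTop t (n + 1) = (windowTop t n + 2 / 3 + 2 * t) / 3 := by
  rw [windowTop, windowTop, pow_succ]
  ring

lemma windowTop_lt_two_mul {t : ℝ} (ht : 1 / 3 < t) (n : ℕ) : windowTop t n < 2 * t := by
  have : 0 < t * (1 / 3 : ℝ) ^ n := by positivity
  rw [windowTop]
  linarith

lemma mem_Icc_of_mem_Kset {n : ℕ} {t y : ℝ} {σ : (Fin n → Fin 3) → (Fin n → Fin 3)}
    (ht : 0 ≤ t) (h : (t, y) ∈ Kset σ) : y ∈ Set.Icc 0 (windowTop t n) := by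
  obtain ⟨s, -, -, h3, h4⟩ := Set.mem_iUnion.mp h
  have hthick : (1 : ℝ) / 3 ^ (n + 1) = (1 / 3) ^ n / 3 := by
    rw [div_pow, one_pow, pow_succ]
    ring
  have hslope := mul_le_mul_of_nonneg_right (valF_le (σ s)) ht
  have := mul_nonneg (valF_nonneg (σ s)) ht
  have := valF_le s
  have := valF_nonneg s
  simp only [windowTop] at *
  constructor <;> nlinarith

lemma Pn_eq_zero {n : ℕ} {t y : ℝ} (ht : 0 ≤ t) (hy : y ∉ Set.Icc 0 (windowTop t n)) :
    Pn n t y = 0 := by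
  have : IsEmpty {r : TernaryEdges n → Bool // (t, y) ∈ Kset (sigmaOf n r)} :=
    ⟨fun r => hy (mem_Icc_of_mem_Kset ht r.2)⟩
  simp [Pn]

/-- Since `t > 1/3`, at most one slope digit is possible at each vertex. -/
lemma Pn_eq_zero_or {t : ℝ} (ht : 1 / 3 < t) (n : ℕ) (y : ℝ) :
    Pn n t y = 0 ∨ Pn n t (y - 2 * t) = 0 := by
  by_contra! h
  have hy := not_imp_comm.mp (Pn_eq_zero (by linarith)) h.1
  have hy' := not_imp_comm.mp (Pn_eq_zero (by linarith)) h.2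
  linarith [hy.2, hy'.1, windowTop_lt_two_mul ht n]

lemma one_sub_Pn_succ (n : ℕ) (t y : ℝ) :
    1 - Pn (n + 1) t y = ∏ a, ((1 - Pn n t (childY t y a true)) +
      (1 - Pn n t (childY t y a false))) / 2 := by
  simp only [Pn, ← unifProb.eq_def, ← unifProb_not]
  rw [unifProb_congr (configEquiv n) (q := fun g => ∀ a, (t, childY t y a (g a).1) ∉
    Kset (sigmaOf n (g a).2)) fun r => by simp [mem_Kset_succ_iff, configEquiv_apply]]
  rw [unifProb_pi fun a (x : Bool × _) => (t, childY t y a x.1) ∉ Kset (sigmaOf n x.2)]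
  exact Finset.prod_congr rfl fun a _ =>
    unifProb_bool_prod fun b r => (t, childY t y a b) ∉ Kset (sigmaOf n r)

/-- Conductance of a unit resistor in series with a network of conductance `C / 2`. -/
noncomputable def seriesCond (C : ℝ≥0∞) : ℝ≥0∞ := (1 + 2 * C⁻¹)⁻¹

/-- Effective conductance from the root to the depth-`n` leaves of the tree `T^*_{n,t,y}` (whose
vertices also record the slope digits), an edge at depth `k + 1` having resistance `2 ^ k`. -/
noncomputable def conductance (t : ℝ) : ℕ → ℝ → ℝ≥0∞
  | 0, y => if y ∈ Set.Icc 0 (windowTop t 0) then ⊤ else 0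
  | n + 1, y => ∑ a : Fin 3, seriesCond (∑ b : Bool, conductance t n (childY t y a b))

lemma seriesCond_le_one (C : ℝ≥0∞) : seriesCond C ≤ 1 :=
  ENNReal.inv_le_one.mpr le_self_add

lemma seriesCond_ne_top (C : ℝ≥0∞) : seriesCond C ≠ ⊤ :=
  ne_top_of_le_ne_top ENNReal.one_ne_top (seriesCond_le_one C)

lemma cayley_toReal {C : ℝ≥0∞} (hC : C ≠ ⊤) :
    cayley C.toReal = 2 * ((1 + C)⁻¹).toReal - 1 := by
  have hc := ENNReal.toReal_nonneg (a := C)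
  rw [cayley, ENNReal.toReal_inv, ENNReal.toReal_add ENNReal.one_ne_top hC, ENNReal.toReal_one]
  field_simp
  ring

lemma cayley_toReal_seriesCond (C : ℝ≥0∞) :
    cayley (seriesCond C).toReal = ((1 + C)⁻¹).toReal := by
  rw [cayley_toReal (seriesCond_ne_top C)]
  rcases eq_or_ne C ⊤ with rfl | hC
  · norm_num [seriesCond]
  rcases eq_or_ne C 0 with rfl | hC0
  · norm_num [seriesCond]
  lift C to NNReal using hC
  have hC0 : C ≠ 0 := by exact_mod_cast hC0
  simp only [seriesCond, ← ENNReal.coe_inv hC0, ← ENNReal.coe_one, ← ENNReal.coe_ofNat,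
    ← ENNReal.coe_mul, ← ENNReal.coe_add]
  rw [← ENNReal.coe_inv (by positivity), ← ENNReal.coe_add, ← ENNReal.coe_inv (by positivity),
    ← ENNReal.coe_inv (by positivity)]
  simp only [ENNReal.coe_toReal, NNReal.coe_inv, NNReal.coe_add, NNReal.coe_mul, NNReal.coe_one,
    NNReal.coe_ofNat]
  have : (0 : ℝ) < C := by positivity
  field_simp
  ring

lemma two_mul_inv_sum_seriesCond_sub_one_le_prod {ι : Type*} (s : Finset ι) (C : ι → ℝ≥0∞) :
    2 * ((1 + ∑ i ∈ s, seriesCond (C i))⁻¹).toReal - 1 ≤ ∏ i ∈ s, ((1 + C i)⁻¹).toReal := by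
  have hfin : ∑ i ∈ s, seriesCond (C i) ≠ ⊤ :=
    ENNReal.sum_ne_top.mpr fun _ _ => seriesCond_ne_top _
  rw [← cayley_toReal hfin, ENNReal.toReal_sum fun _ _ => seriesCond_ne_top _]
  simp only [← cayley_toReal_seriesCond]
  exact cayley_sum_le_prod s (fun _ _ => ENNReal.toReal_nonneg) fun i _ =>
    ENNReal.toReal_le_of_le_ofReal zero_le_one (by simpa using seriesCond_le_one (C i))

lemma childY_true (t y : ℝ) (a : Fin 3) : childY t y a true = childY t y a false - 2 * t := by
  simp [childY]

/-- Lyons' bound. -/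
theorem Pn_le_conductance {t : ℝ} (ht : 1 / 3 < t) (n : ℕ) (y : ℝ) :
    Pn n t y ≤ 2 * (1 - ((1 + conductance t n y)⁻¹).toReal) := by
  induction n generalizing y with
  | zero =>
    by_cases hy : y ∈ Set.Icc 0 (windowTop t 0)
    · have : Pn 0 t y ≤ 1 := unifProb_le_one _
      simp only [conductance, hy, if_true, add_top, ENNReal.inv_top, ENNReal.toReal_zero]
      linarith
    · simp [conductance, hy, Pn_eq_zero (by linarith) hy]
  | succ n ih =>
    set C : Fin 3 → ℝ≥0∞ := fun a => ∑ b, conductance t n (childY t y a b)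
    have hfactor : ∀ a, ((1 + C a)⁻¹).toReal ≤
        ((1 - Pn n t (childY t y a true)) + (1 - Pn n t (childY t y a false))) / 2 := by
      intro a
      have hchild : ∀ b, Pn n t (childY t y a b) ≤ 2 * (1 - ((1 + C a)⁻¹).toReal) := by
        intro b
        have hle : conductance t n (childY t y a b) ≤ C a :=
          Finset.single_le_sum (f := fun b => conductance t n (childY t y a b))
            (fun _ _ => bot_le) (Finset.mem_univ b)
        have : ((1 + C a)⁻¹).toReal ≤ ((1 + conductance t n (childY t y a b))⁻¹).toReal :=
          ENNReal.toReal_mono (by simp) (by gcongr)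
        linarith [ih (childY t y a b)]
      rcases Pn_eq_zero_or ht n (childY t y a false) with h | h
      · linarith [hchild true]
      · rw [← childY_true] at h
        linarith [hchild false]
    have hprod := Finset.prod_le_prod (s := Finset.univ) (fun a _ => ENNReal.toReal_nonneg)
      fun a _ => hfactor a
    rw [← one_sub_Pn_succ] at hprod
    have := two_mul_inv_sum_seriesCond_sub_one_le_prod Finset.univ C
    simp only [conductance]
    linarith

/-- `(c, s)` is a vertex at depth `j` of `T^*_{n,t,y}`, the digits `c` recording the slope
digits `0` (`false`) or `2` (`true`): above `x = t`, the tubes of its generation-`n` descendants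
cover an interval that contains `y`. -/
def IsAlive (t y : ℝ) (n j : ℕ) (c : Fin j → Bool) (s : Fin j → Fin 3) : Prop :=
  y - (valF s / 3 + t * valF fun i => if c i then 2 else 0) ∈
    Set.Icc 0 (windowTop t (n - j) * (1 / 3) ^ j)

noncomputable def levelCount (t y : ℝ) (n j : ℕ) : ℕ :=
  Nat.card {p : (Fin j → Bool) × (Fin j → Fin 3) // IsAlive t y n j p.1 p.2}

/-- The Nash-Williams lower bound for the resistance of `T^*_{n,t,y}`, obtained by
short-circuiting each level. -/
noncomputable def nashWilliamsSum (t y : ℝ) (n : ℕ) : ℝ≥0∞ :=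
  ∑ k ∈ Finset.range n, 2 ^ k / levelCount t y n (k + 1)

lemma isAlive_cons_iff {t y : ℝ} {n j : ℕ} (b : Bool) (a : Fin 3) (c : Fin j → Bool)
    (s : Fin j → Fin 3) :
    IsAlive t y (n + 1) (j + 1) (Fin.cons b c) (Fin.cons a s) ↔
      IsAlive t (childY t y a b) n j c s := by
  have hdigits : (fun i => if (Fin.cons b c : Fin (j + 1) → Bool) i then (2 : Fin 3) else 0) =
      Fin.cons (if b then 2 else 0) fun i => if c i then 2 else 0 := by
    funext i
    induction i using Fin.cases <;> rfl
  simp only [IsAlive, hdigits, valF_cons, Nat.add_sub_add_right, Set.mem_Icc, childY, pow_succ]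
  cases b <;> simp only [Bool.false_eq_true, if_true, if_false] <;> norm_num <;>
    constructor <;> rintro ⟨h1, h2⟩ <;> constructor <;> linarith

lemma levelCount_succ (t y : ℝ) (n j : ℕ) :
    levelCount t y (n + 1) (j + 1) = ∑ a, ∑ b, levelCount t (childY t y a b) n j := by
  let e : (Bool × Fin 3) × ((Fin j → Bool) × (Fin j → Fin 3)) ≃
      (Fin (j + 1) → Bool) × (Fin (j + 1) → Fin 3) :=
    (Equiv.prodProdProdComm _ _ _ _).trans
      ((Fin.consEquiv fun _ => Bool).prodCongr (Fin.consEquiv fun _ => Fin 3))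
  rw [levelCount, ← Nat.card_congr (e.subtypeEquiv
    (p := fun q => IsAlive t (childY t y q.1.2 q.1.1) n j q.2.1 q.2.2)
    fun q => (isAlive_cons_iff _ _ _ _).symm)]
  have hsplit := Nat.card_congr (Equiv.subtypeProdEquivSigmaSubtype
    (α := Bool × Fin 3) (β := (Fin j → Bool) × (Fin j → Fin 3))
    fun ba q => IsAlive t (childY t y ba.2 ba.1) n j q.1 q.2)
  rw [hsplit, Nat.card_sigma, Fintype.sum_prod_type, Finset.sum_comm]
  rfl

lemma levelCount_zero_pos {t y : ℝ} {n : ℕ} (hy : y ∈ Set.Icc 0 (windowTop t n)) :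
    0 < levelCount t y n 0 := by
  have : Nonempty {p : (Fin 0 → Bool) × (Fin 0 → Fin 3) // IsAlive t y n 0 p.1 p.2} :=
    ⟨⟨(Fin.elim0, Fin.elim0), by simpa [IsAlive, valF] using hy⟩⟩
  exact Nat.card_pos

lemma mem_Icc_of_childY_mem {t y : ℝ} {n : ℕ} (ht : 0 ≤ t) {a : Fin 3} {b : Bool}
    (h : childY t y a b ∈ Set.Icc 0 (windowTop t n)) : y ∈ Set.Icc 0 (windowTop t (n + 1)) := by
  have := fin3_le_two a
  have : (0 : ℝ) ≤ a := Nat.cast_nonneg _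
  rw [windowTop_succ]
  simp only [childY, Set.mem_Icc] at *
  cases b <;> simp only [Bool.false_eq_true, if_true, if_false] at h <;> constructor <;> linarith

lemma conductance_eq_zero {t y : ℝ} {n : ℕ} (ht : 0 ≤ t)
    (hy : y ∉ Set.Icc 0 (windowTop t n)) : conductance t n y = 0 := by
  induction n generalizing y with
  | zero => simp [conductance, hy]
  | succ n ih =>
    have : ∀ a b, conductance t n (childY t y a b) = 0 := fun a b =>
      ih fun h => hy (mem_Icc_of_childY_mem ht h)
    simp [conductance, this, seriesCond]

lemma seriesCond_le_inv_sum {t : ℝ} (ht : 0 ≤ t) {n : ℕ}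
    (ih : ∀ y, conductance t n y ≤ (nashWilliamsSum t y n)⁻¹) (y : ℝ) (a : Fin 3) :
    seriesCond (∑ b, conductance t n (childY t y a b)) ≤
      (∑ k ∈ Finset.range (n + 1),
        2 ^ k / ∑ b, (levelCount t (childY t y a b) n k : ℝ≥0∞))⁻¹ := by
  set count : ℕ → ℝ≥0∞ := fun k => ∑ b, (levelCount t (childY t y a b) n k : ℝ≥0∞)
  rcases eq_or_ne (count 0) 0 with h0 | h0
  · -- no child lies in the window, so the branch is cut off
    have : ∀ b, conductance t n (childY t y a b) = 0 := fun b =>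
      conductance_eq_zero ht fun hy => (levelCount_zero_pos hy).ne' <| by
        simpa using (Finset.sum_eq_zero_iff.mp h0) b (Finset.mem_univ b)
    simp [this, seriesCond]
  have hfirst : 2 ^ 0 / count 0 ≤ 1 := by
    have hcast : count 0 = ((∑ b, levelCount t (childY t y a b) n 0 : ℕ) : ℝ≥0∞) := by
      simp [count]
    rw [hcast] at h0 ⊢
    rw [pow_zero, one_div, ENNReal.inv_le_one]
    exact_mod_cast Nat.one_le_iff_ne_zero.mpr (by exact_mod_cast h0)
  have hshort : ∑ k ∈ Finset.range n, 2 ^ k / count (k + 1) ≤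
      (∑ b, conductance t n (childY t y a b))⁻¹ :=
    calc ∑ k ∈ Finset.range n, 2 ^ k / count (k + 1)
        = ∑ k ∈ Finset.range n,
            (∑ b, (2 ^ k / (levelCount t (childY t y a b) n (k + 1) : ℝ≥0∞))⁻¹)⁻¹ :=
          Finset.sum_congr rfl fun k _ => (ENNReal.inv_sum_inv_div _ _ (by positivity)
            (by simp)).symm
      _ ≤ (∑ b, (nashWilliamsSum t (childY t y a b) n)⁻¹)⁻¹ :=
          ENNReal.sum_inv_sum_inv_le_inv_sum_inv_sum _ _ _
      _ ≤ (∑ b, conductance t n (childY t y a b))⁻¹ :=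
          ENNReal.inv_le_inv.mpr (Finset.sum_le_sum fun b _ => ih _)
  refine ENNReal.inv_le_inv.mpr ?_
  rw [Finset.sum_range_succ']
  calc ∑ k ∈ Finset.range n, 2 ^ (k + 1) / count (k + 1) + 2 ^ 0 / count 0
      ≤ 2 * ∑ k ∈ Finset.range n, 2 ^ k / count (k + 1) + 1 := by
        rw [Finset.mul_sum]
        gcongr with k
        rw [pow_succ', mul_div_assoc]
    _ ≤ 1 + 2 * (∑ b, conductance t n (childY t y a b))⁻¹ := by
        rw [add_comm]
        gcongr

/-- Nash-Williams' inequality for the tree `T^*_{n,t,y}`. -/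
theorem conductance_le_inv_nashWilliamsSum {t : ℝ} (ht : 0 ≤ t) (n : ℕ) (y : ℝ) :
    conductance t n y ≤ (nashWilliamsSum t y n)⁻¹ := by
  induction n generalizing y with
  | zero => simp [nashWilliamsSum]
  | succ n ih =>
    set x : Fin 3 → ℕ → ℝ≥0∞ := fun a k =>
      2 ^ k / ∑ b, (levelCount t (childY t y a b) n k : ℝ≥0∞)
    have hlevel : ∀ k, (∑ a, (x a k)⁻¹)⁻¹ = 2 ^ k / levelCount t y (n + 1) (k + 1) := by
      intro k
      rw [ENNReal.inv_sum_inv_div _ _ (by positivity) (by simp), levelCount_succ]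
      push_cast
      rfl
    calc conductance t (n + 1) y
        ≤ ∑ a, (∑ k ∈ Finset.range (n + 1), x a k)⁻¹ :=
          Finset.sum_le_sum fun a _ => seriesCond_le_inv_sum ht ih y a
      _ = ((∑ a, (∑ k ∈ Finset.range (n + 1), x a k)⁻¹)⁻¹)⁻¹ := (inv_inv _).symm
      _ ≤ (∑ k ∈ Finset.range (n + 1), (∑ a, (x a k)⁻¹)⁻¹)⁻¹ :=
          ENNReal.inv_le_inv.mpr (ENNReal.sum_inv_sum_inv_le_inv_sum_inv_sum _ _ fun k a => x a k)
      _ = (nashWilliamsSum t y (n + 1))⁻¹ := by simp only [hlevel, nashWilliamsSum]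

lemma levelCount_le {t : ℝ} (ht0 : 0 ≤ t) (ht1 : t < 1) (y : ℝ) (n j : ℕ) :
    levelCount t y n j ≤ 4 * 2 ^ j := by
  have hslice : ∀ c : Fin j → Bool, Nat.card {s // IsAlive t y n j c s} ≤ 4 := by
    intro c
    have hW : windowTop t (n - j) < 4 / 3 := by
      have := mul_nonneg ht0 (pow_nonneg (by norm_num : (0 : ℝ) ≤ 1 / 3) (n - j))
      rw [windowTop]
      linarith
    have hδ : (0 : ℝ) < (1 / 3) ^ j := by positivity
    refine card_le_of_separated (fun s => valF s.1) hδ (x := 3 * (y - t * valF fun i =>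
      if c i then 2 else 0) - 3 * windowTop t (n - j) * (1 / 3) ^ j) (fun s => ?_)
      fun s s' hss' => pow_le_abs_valF_sub (Subtype.coe_ne_coe.mpr hss')
    obtain ⟨h1, h2⟩ := s.2
    push_cast
    constructor <;> nlinarith
  calc levelCount t y n j = ∑ c : Fin j → Bool, Nat.card {s // IsAlive t y n j c s} := by
        rw [levelCount, Nat.card_congr (Equiv.subtypeProdEquivSigmaSubtype
          (α := Fin j → Bool) (β := Fin j → Fin 3) fun c s => IsAlive t y n j c s), Nat.card_sigma]
    _ ≤ ∑ _c : Fin j → Bool, 4 := Finset.sum_le_sum fun c _ => hslice c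
    _ = 4 * 2 ^ j := by simp [mul_comm]

lemma conductance_le {t : ℝ} (ht0 : 0 ≤ t) (ht1 : t < 1) (n : ℕ) (y : ℝ) :
    conductance t n y ≤ 8 / n := by
  have hterm : ∀ k, (1 : ℝ≥0∞) / 8 ≤ 2 ^ k / levelCount t y n (k + 1) := fun k => by
    have hcount : (levelCount t y n (k + 1) : ℝ≥0∞) ≤ 2 ^ k * 8 := by
      have := levelCount_le ht0 ht1 y n (k + 1)
      rw [pow_succ] at this
      exact_mod_cast this.trans_eq (by ring)
    calc (1 : ℝ≥0∞) / 8 = 2 ^ k / (2 ^ k * 8) := by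
          rw [← ENNReal.mul_div_mul_left 1 8 (c := 2 ^ k) (by positivity) (by simp), mul_one]
      _ ≤ _ := ENNReal.div_le_div_left hcount _
  have hsum : (n : ℝ≥0∞) / 8 ≤ nashWilliamsSum t y n :=
    calc (n : ℝ≥0∞) / 8 = ∑ _k ∈ Finset.range n, (1 : ℝ≥0∞) / 8 := by
          simp [div_eq_mul_inv]
      _ ≤ nashWilliamsSum t y n := Finset.sum_le_sum fun k _ => hterm k
  calc conductance t n y ≤ (nashWilliamsSum t y n)⁻¹ :=
        conductance_le_inv_nashWilliamsSum ht0 n y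
    _ ≤ ((n : ℝ≥0∞) / 8)⁻¹ := ENNReal.inv_le_inv.mpr hsum
    _ = 8 / n := by rw [ENNReal.inv_div (by simp) (by simp)]

end StickyKakeya

open StickyKakeya in
/-- Corollary 2.3: for `1/3 < t < 1`, the probability that `(t, y)` lies in the
random Kakeya set `K_{σ_n}` is at most `C / n` for an absolute constant `C`. -/
theorem Pn_le_div :
    ∃ C : ℝ, 0 < C ∧ ∀ (n : ℕ), 1 ≤ n → ∀ t y : ℝ, 1 / 3 < t → t < 1 →
      Pn n t y ≤ C / n := by
  refine ⟨16, by norm_num, fun n hn t y ht1 ht2 => ?_⟩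
  have hbound := conductance_le (by linarith) ht2 n y
  have hfin : (8 / n : ℝ≥0∞) ≠ ⊤ := ENNReal.div_ne_top (by simp) (by simp; omega)
  have hreal : (conductance t n y).toReal ≤ 8 / n := by
    simpa using ENNReal.toReal_mono hfin hbound
  calc Pn n t y ≤ 2 * (1 - ((1 + conductance t n y)⁻¹).toReal) := Pn_le_conductance ht1 n y
    _ ≤ 2 * (conductance t n y).toReal := by
        gcongr
        exact ENNReal.one_sub_toReal_inv_one_add_le (ne_top_of_le_ne_top hfin hbound)
    _ ≤ 2 * (8 / n) := by gcongr
    _ = 16 / n := by ring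
end
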